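/- arXiv:2510.13061 — 9 statements merged into one kernel-verified Lean document; each statement's English description precedes it below -/
import Mathlib

section
/- For each α with 0 < α < 1 there exists a function f : ℝ → ℝ that is strictly C^{0,α}, and which is moreover even, 2-periodic, and bounded. -/
/-!
Take the Takagi–Weierstrass series `f x = ∑ₙ b^(-nα) dist(bⁿ x, ℤ)` with `b` even and
`b ^ (1 - α) ≥ 3`. Splitting the series at the scale `b^(-N) ≈ |x - y|`, the Lipschitz bound on
the first `N` terms and the sup bound on the rest are both `O(|x - y| ^ α)`.

Conversely, with `q = round (bᵏ y)`, the values of `f` at `q / bᵏ` and `(q + 1/2) / bᵏ` differ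
by at least `b^(-kα) / 4`: the `k`-th term jumps by `b^(-kα) / 2`, the later terms vanish at both
points because `b` is even, and `b ^ (1 - α) ≥ 3` keeps the change of the earlier terms below
`b^(-kα) / 4`. So one of these two points lies within `b^(-k)` of `y` and moves `f` by at least
`b^(-kα) / 8`, which defeats every exponent `β > α`.
-/

open Set Filter Topology

/-- `f : ℝ → ℝ` is strictly `C^{0,α}`: it is `α`-Hölder with some constant `C > 0`, and for
every `β > α` and every `y`, `limsup_{x→y} |f x - f y| / |x - y|^β = ∞` (i.e. the difference
quotients are frequently larger than any bound near `y`). -/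
def StrictlyHolder (f : ℝ → ℝ) (α : ℝ) : Prop :=
  (∃ C : ℝ, 0 < C ∧ ∀ x y : ℝ, |f x - f y| ≤ C * |x - y| ^ α) ∧
  ∀ β : ℝ, α < β → ∀ y M : ℝ, ∃ᶠ x in 𝓝[≠] y, M < |f x - f y| / |x - y| ^ β

open scoped NNReal

-- `‖x‖` in `ℝ/ℤ` is the distance from `x` to the nearest integer.
noncomputable def triangleWave (x : ℝ) : ℝ := ‖(x : UnitAddCircle)‖

lemma abs_triangleWave_le (x : ℝ) : |triangleWave x| ≤ 1 / 2 := by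
  simpa [triangleWave] using AddCircle.norm_le_half_period (1 : ℝ) (x := x) one_ne_zero

lemma lipschitzWith_triangleWave : LipschitzWith 1 triangleWave :=
  LipschitzWith.of_dist_le_mul fun u v => by
    simp only [Real.dist_eq, NNReal.coe_one, one_mul, triangleWave]
    calc |‖(u : UnitAddCircle)‖ - ‖(v : UnitAddCircle)‖|
        ≤ ‖((u - v : ℝ) : UnitAddCircle)‖ := abs_norm_sub_norm_le _ _
      _ ≤ |u - v| := QuotientAddGroup.norm_mk_le_norm

lemma triangleWave_even : Function.Even triangleWave := fun x => by
  simp [triangleWave]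

lemma triangleWave_periodic : Function.Periodic triangleWave 1 := fun x => by
  simp [triangleWave]

lemma triangleWave_intCast (n : ℤ) : triangleWave n = 0 := by
  simp [triangleWave]

lemma triangleWave_intCast_add_half (n : ℤ) : triangleWave (n + 1 / 2) = 1 / 2 := by
  rw [triangleWave, add_comm]
  simpa using AddCircle.norm_half_period_eq (1 : ℝ)

lemma rpow_neg_pow_eq_inv_pow_rpow {b : ℝ} (hb : 0 ≤ b) (α : ℝ) (n : ℕ) :
    (b ^ (-α)) ^ n = ((b ^ n)⁻¹) ^ α := by
  rw [Real.rpow_pow_comm hb, Real.rpow_neg (pow_nonneg hb n), Real.inv_rpow (pow_nonneg hb n)]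

lemma geom_sum_le_pow_div_sub_one {x : ℝ} (hx : 1 < x) (n : ℕ) :
    ∑ i ∈ Finset.range n, x ^ i ≤ x ^ n / (x - 1) := by
  rw [geom_sum_eq hx.ne']
  gcongr
  linarith

noncomputable def lacunarySeries (φ : ℝ → ℝ) (r b x : ℝ) : ℝ := ∑' n : ℕ, r ^ n * φ (b ^ n * x)

section LacunarySeries

variable {φ : ℝ → ℝ}

lemma lacunarySeries_even (hφ : Function.Even φ) (r b : ℝ) :
    Function.Even (lacunarySeries φ r b) := fun x => by
  simp only [lacunarySeries, mul_neg, hφ _]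

lemma lacunarySeries_periodic (hφ : Function.Periodic φ 1) (r : ℝ) (b : ℕ) :
    Function.Periodic (lacunarySeries φ r b) 1 := fun x => by
  simp only [lacunarySeries, mul_add, mul_one]
  congr! 3 with n
  simpa using hφ.nat_mul (b ^ n) ((b : ℝ) ^ n * x)

variable {K r : ℝ}

lemma norm_pow_mul_le_of_abs_le (hφK : ∀ u, |φ u| ≤ K) (hr : 0 ≤ r) (n : ℕ) (u : ℝ) :
    ‖r ^ n * φ u‖ ≤ K * r ^ n := by
  rw [Real.norm_eq_abs, abs_mul, abs_of_nonneg (pow_nonneg hr n), mul_comm]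
  exact mul_le_mul_of_nonneg_right (hφK u) (pow_nonneg hr n)

lemma summable_lacunarySeries (hφK : ∀ u, |φ u| ≤ K) (hr0 : 0 ≤ r) (hr1 : r < 1) (b x : ℝ) :
    Summable fun n : ℕ => r ^ n * φ (b ^ n * x) :=
  ((summable_geometric_of_lt_one hr0 hr1).mul_left K).of_norm_bounded
    fun n => norm_pow_mul_le_of_abs_le hφK hr0 n _

lemma abs_lacunarySeries_le (hφK : ∀ u, |φ u| ≤ K) (hr0 : 0 ≤ r) (hr1 : r < 1) (b x : ℝ) :
    |lacunarySeries φ r b x| ≤ K / (1 - r) := by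
  simpa [lacunarySeries, div_eq_mul_inv] using tsum_of_norm_bounded
    ((hasSum_geometric_of_lt_one hr0 hr1).mul_left K) fun n => norm_pow_mul_le_of_abs_le hφK hr0 n _

lemma abs_sum_range_pow_mul_sub_le {L : ℝ≥0} (hφL : LipschitzWith L φ) (hr : 0 ≤ r) {b : ℝ}
    (hb : 0 ≤ b) (x y : ℝ) (N : ℕ) :
    |∑ n ∈ Finset.range N, r ^ n * (φ (b ^ n * x) - φ (b ^ n * y))| ≤
      L * (∑ n ∈ Finset.range N, (r * b) ^ n) * |x - y| := by
  rw [mul_assoc, Finset.sum_mul, Finset.mul_sum]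
  refine (Finset.abs_sum_le_sum_abs _ _).trans (Finset.sum_le_sum fun n _ => ?_)
  have hlip := hφL.dist_le_mul (b ^ n * x) (b ^ n * y)
  rw [Real.dist_eq, Real.dist_eq, ← mul_sub, abs_mul, abs_of_nonneg (pow_nonneg hb n)] at hlip
  rw [abs_mul, abs_of_nonneg (pow_nonneg hr n), mul_pow]
  calc r ^ n * |φ (b ^ n * x) - φ (b ^ n * y)| ≤ r ^ n * (L * (b ^ n * |x - y|)) := by gcongr
    _ = L * (r ^ n * b ^ n * |x - y|) := by ring

lemma abs_lacunarySeries_sub_le {L : ℝ≥0} (hφL : LipschitzWith L φ) (hφK : ∀ u, |φ u| ≤ K)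
    (hr0 : 0 ≤ r) (hr1 : r < 1) {b : ℝ} (hb : 0 ≤ b) (x y : ℝ) (N : ℕ) :
    |lacunarySeries φ r b x - lacunarySeries φ r b y| ≤
      L * (∑ n ∈ Finset.range N, (r * b) ^ n) * |x - y| + 2 * K * r ^ N / (1 - r) := by
  set d : ℕ → ℝ := fun n => r ^ n * (φ (b ^ n * x) - φ (b ^ n * y))
  have hd : lacunarySeries φ r b x - lacunarySeries φ r b y = ∑' n, d n := by
    simp only [d, lacunarySeries, mul_sub]
    exact ((summable_lacunarySeries hφK hr0 hr1 b x).tsum_sub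
      (summable_lacunarySeries hφK hr0 hr1 b y)).symm
  have hsummable : Summable d := by
    simpa [d, mul_sub] using (summable_lacunarySeries hφK hr0 hr1 b x).sub
      (summable_lacunarySeries hφK hr0 hr1 b y)
  have head := abs_sum_range_pow_mul_sub_le hφL hr0 hb x y N
  have tail : |∑' n, d (n + N)| ≤ 2 * K * r ^ N / (1 - r) := by
    have hgeom := (hasSum_geometric_of_lt_one hr0 hr1).mul_left (2 * K * r ^ N)
    rw [← div_eq_mul_inv] at hgeom
    rw [← Real.norm_eq_abs]
    refine tsum_of_norm_bounded hgeom fun n => ?_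
    have hx := norm_pow_mul_le_of_abs_le hφK hr0 (n + N) (b ^ (n + N) * x)
    have hy := norm_pow_mul_le_of_abs_le hφK hr0 (n + N) (b ^ (n + N) * y)
    calc ‖d (n + N)‖
        ≤ ‖r ^ (n + N) * φ (b ^ (n + N) * x)‖ + ‖r ^ (n + N) * φ (b ^ (n + N) * y)‖ := by
          simpa only [d, mul_sub] using norm_sub_le _ _
      _ ≤ K * r ^ (n + N) + K * r ^ (n + N) := add_le_add hx hy
      _ = 2 * K * r ^ N * r ^ n := by ring
  rw [hd, ← hsummable.sum_add_tsum_nat_add N]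
  exact (abs_add_le _ _).trans (add_le_add head tail)

lemma abs_lacunarySeries_sub_le_mul_pow {L : ℝ≥0} (hφL : LipschitzWith L φ)
    (hφK : ∀ u, |φ u| ≤ K) (hr0 : 0 ≤ r) (hr1 : r < 1) {b : ℝ} (hb : 0 ≤ b) (hrb : 1 < r * b)
    {x y : ℝ} {N : ℕ} (hN : b ^ N * |x - y| ≤ b) :
    |lacunarySeries φ r b x - lacunarySeries φ r b y| ≤
      (L * b / (r * b - 1) + 2 * K / (1 - r)) * r ^ N := by
  calc |lacunarySeries φ r b x - lacunarySeries φ r b y|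
      ≤ L * (∑ i ∈ Finset.range N, (r * b) ^ i) * |x - y| + 2 * K * r ^ N / (1 - r) :=
        abs_lacunarySeries_sub_le hφL hφK hr0 hr1 hb x y N
    _ ≤ L * ((r * b) ^ N / (r * b - 1)) * |x - y| + 2 * K * r ^ N / (1 - r) := by
        gcongr
        exact geom_sum_le_pow_div_sub_one hrb N
    _ = L * r ^ N * (b ^ N * |x - y|) / (r * b - 1) + 2 * K * r ^ N / (1 - r) := by ring
    _ ≤ L * r ^ N * b / (r * b - 1) + 2 * K * r ^ N / (1 - r) := by
        have : 0 < r * b - 1 := by linarith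
        gcongr
    _ = (L * b / (r * b - 1) + 2 * K / (1 - r)) * r ^ N := by ring

theorem exists_lacunarySeries_holder {L : ℝ≥0} (hφL : LipschitzWith L φ)
    (hφK : ∀ u, |φ u| ≤ K) {α b : ℝ} (hα0 : 0 < α) (hα1 : α < 1) (hb : 1 < b) :
    ∃ C, 0 < C ∧ ∀ x y,
      |lacunarySeries φ (b ^ (-α)) b x - lacunarySeries φ (b ^ (-α)) b y| ≤ C * |x - y| ^ α := by
  set r := b ^ (-α)
  set f := lacunarySeries φ r b
  have hb0 : 0 < b := by linarith
  have hr0 : 0 < r := Real.rpow_pos_of_pos hb0 _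
  have hr1 : r < 1 := Real.rpow_lt_one_of_one_lt_of_neg hb (by linarith)
  have hrb : 1 < r * b := by
    rw [← Real.rpow_add_one hb0.ne']
    exact Real.one_lt_rpow hb (by linarith)
  have hK : 0 ≤ K := (abs_nonneg _).trans (hφK 0)
  set C := L * b / (r * b - 1) + 2 * K / (1 - r)
  have hC : 0 ≤ C := add_nonneg (div_nonneg (by positivity) (by linarith))
    (div_nonneg (by positivity) (by linarith))
  refine ⟨C + 1, by linarith, fun x y => ?_⟩
  suffices |f x - f y| ≤ C * |x - y| ^ α from this.trans (by gcongr; linarith)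
  obtain hxy | hpos := (abs_nonneg (x - y)).eq_or_lt
  · obtain rfl : x = y := sub_eq_zero.1 (abs_eq_zero.1 hxy.symm)
    simp [Real.zero_rpow hα0.ne']
  obtain h1 | h1 := le_or_gt 1 |x - y|
  · calc |f x - f y| ≤ |f x| + |f y| := abs_sub _ _
      _ ≤ K / (1 - r) + K / (1 - r) := add_le_add (abs_lacunarySeries_le hφK hr0.le hr1 b x)
          (abs_lacunarySeries_le hφK hr0.le hr1 b y)
      _ = 2 * K / (1 - r) := by ring
      _ ≤ C := le_add_of_nonneg_left (div_nonneg (by positivity) (by linarith))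
      _ ≤ C * |x - y| ^ α := le_mul_of_one_le_right hC (Real.one_le_rpow h1 hα0.le)
  obtain ⟨n, hn1, hn2⟩ := exists_nat_pow_near_of_lt_one hpos h1.le (inv_pos.2 hb0)
    (inv_lt_one_of_one_lt₀ hb)
  rw [inv_pow] at hn1 hn2
  have hbN : b ^ (n + 1) * |x - y| ≤ b := by
    rw [pow_succ, mul_right_comm]
    calc b ^ n * |x - y| * b ≤ b ^ n * (b ^ n)⁻¹ * b := by gcongr
      _ = b := by field_simp
  have hrN : r ^ (n + 1) ≤ |x - y| ^ α := by
    rw [rpow_neg_pow_eq_inv_pow_rpow hb0.le]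
    gcongr
  calc |f x - f y| ≤ C * r ^ (n + 1) :=
        abs_lacunarySeries_sub_le_mul_pow hφL hφK hr0.le hr1 hb0.le hrb hbN
    _ ≤ C * |x - y| ^ α := by gcongr

end LacunarySeries

section TriangleWave

variable {r : ℝ} {b : ℕ}

lemma lacunarySeries_triangleWave_sub_eq (hb : Even b) (hr0 : 0 ≤ r) (hr1 : r < 1) (hb0 : b ≠ 0)
    (q : ℤ) (k : ℕ) :
    lacunarySeries triangleWave r b ((q + 1 / 2) / (b : ℝ) ^ k) -
        lacunarySeries triangleWave r b (q / (b : ℝ) ^ k) =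
      ∑ n ∈ Finset.range k, r ^ n * (triangleWave ((b : ℝ) ^ n * ((q + 1 / 2) / (b : ℝ) ^ k)) -
        triangleWave ((b : ℝ) ^ n * (q / (b : ℝ) ^ k))) + r ^ k / 2 := by
  set x : ℝ := (q + 1 / 2) / (b : ℝ) ^ k
  set x' : ℝ := q / (b : ℝ) ^ k
  set d : ℕ → ℝ := fun n =>
    r ^ n * (triangleWave ((b : ℝ) ^ n * x) - triangleWave ((b : ℝ) ^ n * x'))
  have hbk : (b : ℝ) ^ k ≠ 0 := pow_ne_zero k (Nat.cast_ne_zero.2 hb0)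
  have hx : ∀ n, (b : ℝ) ^ (k + n) * x = (b : ℝ) ^ n * (q + 1 / 2) := fun n => by
    simp only [x]; field_simp; ring
  have hx' : ∀ n, (b : ℝ) ^ (k + n) * x' = (b : ℝ) ^ n * q := fun n => by
    simp only [x']; field_simp; ring
  have hvanish : ∀ n ∉ Finset.range (k + 1), d n = 0 := by
    intro n hn
    obtain ⟨j, rfl⟩ : ∃ j, n = k + (j + 1) :=
      ⟨n - (k + 1), by simp only [Finset.mem_range, not_lt] at hn; omega⟩
    obtain ⟨m, hm⟩ := hb
    have hint : (b : ℝ) ^ (j + 1) * (q + 1 / 2) = ((b ^ j * m * (2 * q + 1) : ℤ) : ℝ) := by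
      rw [hm]; push_cast; ring
    have hint' : (b : ℝ) ^ (j + 1) * q = ((b ^ (j + 1) * q : ℤ) : ℝ) := by push_cast; ring
    simp only [d, hx, hx', hint, hint', triangleWave_intCast, sub_self, mul_zero]
  have hk : d k = r ^ k / 2 := by
    have hxk : (b : ℝ) ^ k * x = q + 1 / 2 := by simpa using hx 0
    have hxk' : (b : ℝ) ^ k * x' = q := by simpa using hx' 0
    simp only [d, hxk, hxk', triangleWave_intCast_add_half, triangleWave_intCast]
    ring
  have hsub : lacunarySeries triangleWave r b x - lacunarySeries triangleWave r b x' =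
      ∑' n, d n := by
    simp only [d, lacunarySeries, mul_sub]
    exact ((summable_lacunarySeries abs_triangleWave_le hr0 hr1 b x).tsum_sub
      (summable_lacunarySeries abs_triangleWave_le hr0 hr1 b x')).symm
  rw [hsub, tsum_eq_sum hvanish, Finset.sum_range_succ, hk]

lemma le_abs_lacunarySeries_triangleWave_sub (hb : Even b) (hr0 : 0 ≤ r) (hr1 : r < 1)
    (hrb : 3 ≤ r * b) (q : ℤ) (k : ℕ) :
    r ^ k / 4 ≤ |lacunarySeries triangleWave r b ((q + 1 / 2) / (b : ℝ) ^ k) -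
      lacunarySeries triangleWave r b (q / (b : ℝ) ^ k)| := by
  have hb0 : b ≠ 0 := by rintro rfl; norm_num at hrb
  rw [lacunarySeries_triangleWave_sub_eq hb hr0 hr1 hb0]
  set x : ℝ := (q + 1 / 2) / (b : ℝ) ^ k
  set x' : ℝ := q / (b : ℝ) ^ k
  have hxx' : |x - x'| = 1 / (2 * (b : ℝ) ^ k) := by
    have hbk : (b : ℝ) ^ k ≠ 0 := pow_ne_zero k (Nat.cast_ne_zero.2 hb0)
    rw [show x - x' = 1 / (2 * (b : ℝ) ^ k) by simp only [x, x']; field_simp; ring]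
    exact abs_of_nonneg (by positivity)
  set S := ∑ n ∈ Finset.range k,
    r ^ n * (triangleWave ((b : ℝ) ^ n * x) - triangleWave ((b : ℝ) ^ n * x'))
  have hS : |S| ≤ r ^ k / 4 := by
    calc |S| ≤ (1 : ℝ≥0) * (∑ n ∈ Finset.range k, (r * b) ^ n) * |x - x'| :=
          abs_sum_range_pow_mul_sub_le lipschitzWith_triangleWave hr0 (Nat.cast_nonneg b) x x' k
      _ ≤ 1 * ((r * b) ^ k / (r * b - 1)) * (1 / (2 * (b : ℝ) ^ k)) := by
          rw [hxx', NNReal.coe_one]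
          gcongr
          exact geom_sum_le_pow_div_sub_one (by linarith) k
      _ = r ^ k / (2 * (r * b - 1)) := by field_simp; ring
      _ ≤ r ^ k / 4 := by gcongr; linarith
  exact le_abs.2 (Or.inl (by linarith [neg_abs_le S]))

lemma exists_near_le_abs_lacunarySeries_triangleWave_sub (hb : Even b) (hr0 : 0 < r) (hr1 : r < 1)
    (hrb : 3 ≤ r * b) (y : ℝ) (k : ℕ) :
    ∃ z, z ≠ y ∧ |z - y| ≤ ((b : ℝ) ^ k)⁻¹ ∧
      r ^ k / 8 ≤ |lacunarySeries triangleWave r b z - lacunarySeries triangleWave r b y| := by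
  set f := lacunarySeries triangleWave r b
  set q := round ((b : ℝ) ^ k * y)
  have hbk : 0 < (b : ℝ) ^ k := by
    have : (0 : ℝ) < b := by by_contra! h; nlinarith
    positivity
  have hnear : ∀ t : ℝ, |t| ≤ 1 / 2 → |(q + t) / (b : ℝ) ^ k - y| ≤ ((b : ℝ) ^ k)⁻¹ := by
    intro t ht
    have hq : |(b : ℝ) ^ k * y - q| ≤ 1 / 2 := abs_sub_round _
    rw [show (q + t) / (b : ℝ) ^ k - y = (t - ((b : ℝ) ^ k * y - q)) / (b : ℝ) ^ k by
      field_simp; ring, abs_div, abs_of_pos hbk, div_eq_mul_inv]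
    calc |t - ((b : ℝ) ^ k * y - q)| * ((b : ℝ) ^ k)⁻¹ ≤ 1 * ((b : ℝ) ^ k)⁻¹ := by
          gcongr
          linarith [abs_sub t ((b : ℝ) ^ k * y - q)]
      _ = ((b : ℝ) ^ k)⁻¹ := one_mul _
  have hne : ∀ z, r ^ k / 8 ≤ |f z - f y| → z ≠ y := by
    rintro z hz rfl
    rw [sub_self, abs_zero] at hz
    linarith [pow_pos hr0 k]
  have hjump := le_abs_lacunarySeries_triangleWave_sub hb hr0.le hr1 hrb q k
  obtain hfar | hclose := le_or_gt (r ^ k / 8) |f ((q + 1 / 2) / (b : ℝ) ^ k) - f y|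
  · exact ⟨_, hne _ hfar, hnear _ (by norm_num [abs_of_pos]), hfar⟩
  · have hfar : r ^ k / 8 ≤ |f (q / (b : ℝ) ^ k) - f y| := by
      linarith [abs_sub_le (f ((q + 1 / 2) / (b : ℝ) ^ k)) (f y) (f (q / (b : ℝ) ^ k)),
        abs_sub_comm (f y) (f (q / (b : ℝ) ^ k))]
    exact ⟨_, hne _ hfar, by simpa using hnear 0 (by norm_num), hfar⟩

end TriangleWave

lemma frequently_lt_abs_sub_div_rpow {f : ℝ → ℝ} {y α β c : ℝ} {δ : ℕ → ℝ}
    (hδ : Tendsto δ atTop (𝓝[>] 0)) (hc : 0 < c) (hβ : 0 ≤ β) (hαβ : α < β)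
    (h : ∀ k, ∃ z, z ≠ y ∧ |z - y| ≤ δ k ∧ c * δ k ^ α ≤ |f z - f y|) (M : ℝ) :
    ∃ᶠ x in 𝓝[≠] y, M < |f x - f y| / |x - y| ^ β := by
  choose z hzy hzδ hzf using h
  obtain ⟨hδ0, hδpos⟩ := tendsto_nhdsWithin_iff.1 hδ
  have hz : Tendsto z atTop (𝓝[≠] y) := by
    refine tendsto_nhdsWithin_iff.2 ⟨?_, Eventually.of_forall hzy⟩
    rw [tendsto_iff_dist_tendsto_zero]
    exact squeeze_zero (fun _ => dist_nonneg) (fun k => (Real.dist_eq _ _).trans_le (hzδ k)) hδ0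
  have hlarge : Tendsto (fun k => c * δ k ^ (α - β)) atTop atTop :=
    ((tendsto_rpow_neg_nhdsGT_zero (sub_neg.2 hαβ)).comp hδ).const_mul_atTop hc
  refine hz.frequently (Eventually.frequently ?_)
  filter_upwards [hlarge.eventually_gt_atTop M, hδpos] with k hk hδk
  have hzpos : 0 < |z k - y| := abs_pos.2 (sub_ne_zero.2 (hzy k))
  calc M < c * δ k ^ (α - β) := hk
    _ = c * δ k ^ α / δ k ^ β := by rw [Real.rpow_sub (mem_Ioi.1 hδk), mul_div_assoc]
    _ ≤ |f (z k) - f y| / |z k - y| ^ β := by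
        gcongr
        exacts [hzf k, hzδ k]

lemma exists_even_three_le_rpow {γ : ℝ} (hγ : 0 < γ) :
    ∃ b : ℕ, Even b ∧ 1 < (b : ℝ) ∧ 3 ≤ (b : ℝ) ^ γ := by
  obtain ⟨m, hm3, hm1⟩ := ((((tendsto_rpow_atTop hγ).comp
    (tendsto_natCast_atTop_atTop.const_mul_atTop two_pos)).eventually_ge_atTop 3).and
    (eventually_ge_atTop 1)).exists
  have hm1' : (1 : ℝ) ≤ m := by exact_mod_cast hm1
  refine ⟨2 * m, even_two_mul m, ?_, ?_⟩ <;> push_cast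
  · linarith
  · simpa using hm3

/-- For each `0 < α < 1` there is a strictly `C^{0,α}` function `f : ℝ → ℝ` that is even,
`2`-periodic, and bounded. -/
theorem exists_strictlyHolder_even_periodic_bounded (α : ℝ) (hα0 : 0 < α) (hα1 : α < 1) :
    ∃ f : ℝ → ℝ, StrictlyHolder f α ∧ (∀ x, f (-x) = f x) ∧ (∀ x, f (x + 2) = f x) ∧
      ∃ B : ℝ, ∀ x, |f x| ≤ B := by
  obtain ⟨b, hb_even, hb1, hb3⟩ := exists_even_three_le_rpow (sub_pos.2 hα1)
  have hb0 : (0 : ℝ) < b := by linarith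
  set r := (b : ℝ) ^ (-α)
  have hr0 : 0 < r := Real.rpow_pos_of_pos hb0 _
  have hr1 : r < 1 := Real.rpow_lt_one_of_one_lt_of_neg hb1 (by linarith)
  have hrb : 3 ≤ r * b := by
    rwa [← Real.rpow_add_one hb0.ne', neg_add_eq_sub]
  have hδ : Tendsto (fun k : ℕ => ((b : ℝ) ^ k)⁻¹) atTop (𝓝[>] 0) :=
    tendsto_inv_atTop_nhdsGT_zero.comp (tendsto_pow_atTop_atTop_of_one_lt hb1)
  have hper := lacunarySeries_periodic triangleWave_periodic r b
  refine ⟨lacunarySeries triangleWave r b, ⟨?_, fun β hβ y => ?_⟩,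
    lacunarySeries_even triangleWave_even r b,
    fun x => by simpa [one_add_one_eq_two] using hper.add_period hper x,
    _, abs_lacunarySeries_le abs_triangleWave_le hr0.le hr1 b⟩
  · exact exists_lacunarySeries_holder lipschitzWith_triangleWave abs_triangleWave_le hα0 hα1 hb1
  · refine frequently_lt_abs_sub_div_rpow hδ (by norm_num : (0 : ℝ) < 1 / 8) (by linarith) hβ
      fun k => ?_
    obtain ⟨z, hzy, hzδ, hzf⟩ :=
      exists_near_le_abs_lacunarySeries_triangleWave_sub hb_even hr0 hr1 hrb y k
    refine ⟨z, hzy, hzδ, ?_⟩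
    rwa [← rpow_neg_pow_eq_inv_pow_rpow hb0.le, one_div_mul_eq_div]
end

section
/- Let I ⊆ ℝ be an interval, x₀ ∈ I, and let α₁, α₂, …, α_n ∈ (0,1] be distinct. If for each j ∈ {1,…,n} the function f_j : I → ℝ is strictly C^{0,α_j} at x₀, then the sum f = f₁ + f₂ + ⋯ + f_n is strictly C^{0,α} at x₀, where α = min_{1 ≤ j ≤ n} α_j. -/
open Set Filter Topology

/-- `f` is strictly `C^{0,α}` at `x₀`, relative to the set `I`:
`limsup_{x→x₀, x ∈ I} |f x - f x₀|/|x-x₀|^α < ∞` and, for every `β > α`,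
`limsup_{x→x₀, x ∈ I} |f x - f x₀|/|x-x₀|^β = ∞`. -/
def StrictHolderAt (f : ℝ → ℝ) (I : Set ℝ) (α x₀ : ℝ) : Prop :=
  (∃ M : ℝ, ∀ᶠ x in 𝓝[I \ {x₀}] x₀, |f x - f x₀| / |x - x₀| ^ α ≤ M) ∧
  ∀ β : ℝ, α < β → ∀ M : ℝ, ∃ᶠ x in 𝓝[I \ {x₀}] x₀, M < |f x - f x₀| / |x - x₀| ^ β

/-- If `α₁, …, α_n ∈ (0,1]` are distinct and each `f_j` is strictly `C^{0,α_j}` at a point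
`x₀` of an interval `I`, then `f₁ + ⋯ + f_n` is strictly `C^{0,α}` at `x₀`, where
`α = min_j α_j`. -/
theorem strictHolderAt_sum (I : Set ℝ) (hI : I.OrdConnected) (x₀ : ℝ) (hx₀ : x₀ ∈ I)
    (n : ℕ) (hn : 0 < n) (α : Fin n → ℝ) (hinj : Function.Injective α)
    (hα : ∀ j, α j ∈ Ioc (0 : ℝ) 1) (f : Fin n → ℝ → ℝ)
    (hf : ∀ j, StrictHolderAt (f j) I (α j) x₀)
    (αmin : ℝ) (hmem : ∃ j, α j = αmin) (hmin : ∀ j, αmin ≤ α j) :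
    StrictHolderAt (fun x => ∑ j, f j x) I αmin x₀ := by
  classical
  set l := 𝓝[I \ {x₀}] x₀ with hl
  have hd0 : Tendsto (fun x : ℝ => |x - x₀|) l (𝓝 0) := by
    have h : Tendsto (fun x : ℝ => |x - x₀|) (𝓝 x₀) (𝓝 |x₀ - x₀|) :=
      ((continuous_id.sub continuous_const).abs).tendsto x₀
    simpa using h.mono_left nhdsWithin_le_nhds
  have evlt1 : ∀ᶠ x in l, |x - x₀| < 1 := hd0.eventually_lt_const one_pos
  have evmem : ∀ᶠ x in l, x ∈ I \ {x₀} := eventually_mem_nhdsWithin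
  choose M hM using fun j => (hf j).1
  have evall : ∀ᶠ x in l, ∀ j, |f j x - f j x₀| / |x - x₀| ^ (α j) ≤ M j :=
    eventually_all.2 hM
  constructor
  · refine ⟨∑ j, max (M j) 0, ?_⟩
    filter_upwards [evmem, evlt1, evall] with x hx hx1 hall
    have hdpos : 0 < |x - x₀| := abs_pos.2 (sub_ne_zero.2 hx.2)
    have key : ∀ j, |f j x - f j x₀| ≤ max (M j) 0 * |x - x₀| ^ αmin := by
      intro j
      have h1 : |f j x - f j x₀| ≤ M j * |x - x₀| ^ (α j) :=
        (div_le_iff₀ (Real.rpow_pos_of_pos hdpos _)).1 (hall j)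
      have h2 : |x - x₀| ^ (α j) ≤ |x - x₀| ^ αmin :=
        Real.rpow_le_rpow_of_exponent_ge hdpos hx1.le (hmin j)
      calc |f j x - f j x₀| ≤ M j * |x - x₀| ^ (α j) := h1
        _ ≤ max (M j) 0 * |x - x₀| ^ αmin :=
            mul_le_mul (le_max_left _ _) h2 (Real.rpow_pos_of_pos hdpos _).le
              (le_max_right _ _)
    rw [div_le_iff₀ (Real.rpow_pos_of_pos hdpos _)]
    calc |(∑ j, f j x) - ∑ j, f j x₀| = |∑ j, (f j x - f j x₀)| := by
          rw [Finset.sum_sub_distrib]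
      _ ≤ ∑ j, |f j x - f j x₀| := Finset.abs_sum_le_sum_abs _ _
      _ ≤ ∑ j, max (M j) 0 * |x - x₀| ^ αmin :=
          Finset.sum_le_sum fun j _ => key j
      _ = (∑ j, max (M j) 0) * |x - x₀| ^ αmin := (Finset.sum_mul _ _ _).symm
  · intro β hβ M₀
    obtain ⟨j₀, hj₀⟩ := hmem
    have hne : Nonempty (Fin n) := ⟨⟨0, hn⟩⟩
    set c := Finset.univ.inf' Finset.univ_nonempty
        (fun j => if j = j₀ then β else α j) with hc
    have hcβ : c ≤ β := by
      have h := Finset.inf'_le (fun j => if j = j₀ then β else α j)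
        (Finset.mem_univ j₀)
      rwa [if_pos rfl] at h
    have hcα : ∀ j, j ≠ j₀ → c ≤ α j := by
      intro j hj
      have h := Finset.inf'_le (fun j => if j = j₀ then β else α j)
        (Finset.mem_univ j)
      rwa [if_neg hj] at h
    have hαc : αmin < c := by
      rw [Finset.lt_inf'_iff]
      intro j _
      by_cases h : j = j₀
      · simpa [h] using hβ
      · simp only [if_neg h]
        rcases lt_or_eq_of_le (hmin j) with h' | h'
        · exact h'
        · exact absurd (hinj (h'.symm.trans hj₀.symm)) h
    set β' := (αmin + c) / 2 with hβ'
    have hβ'1 : αmin < β' := by simp only [hβ']; linarith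
    have hβ'2 : β' < c := by simp only [hβ']; linarith
    have hβ'β : β' < β := lt_of_lt_of_le hβ'2 hcβ
    have evsmall : ∀ᶠ x in l, ∀ j, j ≠ j₀ → |f j x - f j x₀| ≤ |x - x₀| ^ β' := by
      rw [eventually_all]
      intro j
      by_cases hj : j = j₀
      · filter_upwards with x h; exact absurd hj h
      · have hp : 0 < α j - β' := by have := hcα j hj; linarith
        have htend : Tendsto (fun x => M j * |x - x₀| ^ (α j - β')) l (𝓝 0) := by
          have h1 : Tendsto (fun t : ℝ => t ^ (α j - β')) (𝓝 0) (𝓝 0) := by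
            have h2 := (Real.continuousAt_rpow_const 0 (α j - β') (Or.inr hp.le)).tendsto
            simpa [Real.zero_rpow hp.ne'] using h2
          have h3 : Tendsto (fun x => |x - x₀| ^ (α j - β')) l (𝓝 0) := h1.comp hd0
          simpa using (tendsto_const_nhds.mul h3 : Tendsto _ l (𝓝 ((M j) * 0)))
        have evlt := htend.eventually_lt_const one_pos
        filter_upwards [evmem, hM j, evlt] with x hx hj1 hj2 _
        have hdpos : 0 < |x - x₀| := abs_pos.2 (sub_ne_zero.2 hx.2)
        have h1 : |f j x - f j x₀| ≤ M j * |x - x₀| ^ (α j) :=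
          (div_le_iff₀ (Real.rpow_pos_of_pos hdpos _)).1 hj1
        have hsplit : |x - x₀| ^ (α j) = |x - x₀| ^ (α j - β') * |x - x₀| ^ β' := by
          rw [← Real.rpow_add hdpos]; ring_nf
        calc |f j x - f j x₀| ≤ M j * |x - x₀| ^ (α j) := h1
          _ = M j * |x - x₀| ^ (α j - β') * |x - x₀| ^ β' := by
              rw [hsplit, mul_assoc]
          _ ≤ 1 * |x - x₀| ^ β' :=
              mul_le_mul_of_nonneg_right hj2.le (Real.rpow_pos_of_pos hdpos _).le
          _ = |x - x₀| ^ β' := one_mul _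
    set M' := max M₀ 0 with hM'
    have hM'0 : 0 ≤ M' := le_max_right _ _
    have hfreq := (hf j₀).2 β' (by rw [hj₀]; exact hβ'1) (M' + n)
    refine (hfreq.and_eventually (evsmall.and (evmem.and evlt1))).mono ?_
    rintro x ⟨h1, h2, hx, hx1⟩
    have hdpos : 0 < |x - x₀| := abs_pos.2 (sub_ne_zero.2 hx.2)
    have hdβ' : (0:ℝ) < |x - x₀| ^ β' := Real.rpow_pos_of_pos hdpos _
    have hdβ : (0:ℝ) < |x - x₀| ^ β := Real.rpow_pos_of_pos hdpos _
    have hA : (M' + n) * |x - x₀| ^ β' < |f j₀ x - f j₀ x₀| :=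
      (lt_div_iff₀ hdβ').1 h1
    have hrest : |∑ j ∈ Finset.univ.erase j₀, (f j x - f j x₀)| ≤ n * |x - x₀| ^ β' := by
      calc |∑ j ∈ Finset.univ.erase j₀, (f j x - f j x₀)|
          ≤ ∑ j ∈ Finset.univ.erase j₀, |f j x - f j x₀| :=
            Finset.abs_sum_le_sum_abs _ _
        _ ≤ ∑ _j ∈ Finset.univ.erase j₀, |x - x₀| ^ β' :=
            Finset.sum_le_sum fun j hj => h2 j (Finset.ne_of_mem_erase hj)
        _ = ((Finset.univ.erase j₀).card : ℝ) * |x - x₀| ^ β' := by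
            rw [Finset.sum_const, nsmul_eq_mul]
        _ ≤ n * |x - x₀| ^ β' := by
            apply mul_le_mul_of_nonneg_right _ hdβ'.le
            exact_mod_cast Finset.card_erase_le.trans (by simp)
    have hsum : ∑ j, (f j x - f j x₀) =
        (f j₀ x - f j₀ x₀) + ∑ j ∈ Finset.univ.erase j₀, (f j x - f j x₀) :=
      (Finset.add_sum_erase _ _ (Finset.mem_univ j₀)).symm
    have hB : M' * |x - x₀| ^ β' < |∑ j, (f j x - f j x₀)| := by
      have habs : |f j₀ x - f j₀ x₀| - |∑ j ∈ Finset.univ.erase j₀, (f j x - f j x₀)|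
          ≤ |∑ j, (f j x - f j x₀)| := by
        rw [hsum]
        have h3 := abs_sub_abs_le_abs_sub (f j₀ x - f j₀ x₀)
          (-(∑ j ∈ Finset.univ.erase j₀, (f j x - f j x₀)))
        rwa [abs_neg, sub_neg_eq_add] at h3
      nlinarith
    have hpow : |x - x₀| ^ β ≤ |x - x₀| ^ β' :=
      Real.rpow_le_rpow_of_exponent_ge hdpos hx1.le hβ'β.le
    have hC : M' * |x - x₀| ^ β < |∑ j, (f j x - f j x₀)| :=
      lt_of_le_of_lt (mul_le_mul_of_nonneg_left hpow hM'0) hB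
    have hfin : M' < |(∑ j, f j x) - ∑ j, f j x₀| / |x - x₀| ^ β := by
      rw [lt_div_iff₀ hdβ, ← Finset.sum_sub_distrib]
      exact hC
    exact lt_of_le_of_lt (le_max_left _ _) hfin
end

section
/- Let I and J be intervals of ℝ, let u : J → I be a C¹ function, and let x₀ be an interior point of J. If f : I → ℝ is strictly C^{0,α} at u(x₀) for some α > 0 and u′(x₀) ≠ 0, then the composition f∘u is strictly C^{0,α} at x₀. -/
/-!
Both halves of strict `C^{0,α}` regularity are statements `f - f x₀ = O(|x - x₀|^γ)` (or their
negations) along the punctured neighbourhood filter, and such bounds pull back along any map that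
sends punctured neighbourhoods to punctured neighbourhoods and satisfies `u x - u x₀ = O(x - x₀)`.
By the inverse function theorem, `u` is such a map near `x₀` and so is its local inverse near
`u x₀`: the upper bound for `f` pulls back to `f ∘ u`, while a bound for `f ∘ u` at an exponent
`β > α` would pull back along the inverse to one for `f`.
-/

open Set Filter Topology

theorem exists_eventually_div_rpow_le_iff_isBigO {F : ℝ → ℝ} {s : Set ℝ} {x₀ γ : ℝ} :
    (∃ M : ℝ, ∀ᶠ x in 𝓝[s \ {x₀}] x₀, |F x| / |x - x₀| ^ γ ≤ M) ↔
      F =O[𝓝[s \ {x₀}] x₀] fun x => |x - x₀| ^ γ := by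
  have hpos : ∀ᶠ x in 𝓝[s \ {x₀}] x₀, 0 < |x - x₀| ^ γ :=
    eventually_mem_nhdsWithin.mono fun x hx =>
      Real.rpow_pos_of_pos (abs_pos.2 (sub_ne_zero.2 hx.2)) γ
  rw [Asymptotics.isBigO_iff_isBoundedUnder_le_div (hpos.mono fun x hx => hx.ne')]
  refine exists_congr fun M => eventually_congr (hpos.mono fun x hx => ?_)
  simp only [mem_ofPred_eq, Real.norm_eq_abs, abs_of_pos hx]

theorem strictHolderAt_iff_isBigO {f : ℝ → ℝ} {s : Set ℝ} {α x₀ : ℝ} :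
    StrictHolderAt f s α x₀ ↔
      ((fun x => f x - f x₀) =O[𝓝[s \ {x₀}] x₀] fun x => |x - x₀| ^ α) ∧
      ∀ β, α < β → ¬(fun x => f x - f x₀) =O[𝓝[s \ {x₀}] x₀] fun x => |x - x₀| ^ β := by
  simp only [StrictHolderAt, ← exists_eventually_div_rpow_le_iff_isBigO, not_exists,
    not_eventually, not_le]

theorem tendsto_nhdsWithin_diff_singleton_of_leftInverse {u v : ℝ → ℝ} {s t : Set ℝ}
    {x₀ y₀ : ℝ} (hu : Tendsto u (𝓝 x₀) (𝓝 y₀)) (hvu : ∀ᶠ x in 𝓝 x₀, v (u x) = x)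
    (hvy₀ : v y₀ = x₀) (hst : ∀ᶠ x in 𝓝[s \ {x₀}] x₀, u x ∈ t) :
    Tendsto u (𝓝[s \ {x₀}] x₀) (𝓝[t \ {y₀}] y₀) := by
  refine tendsto_nhdsWithin_iff.2 ⟨hu.mono_left nhdsWithin_le_nhds, ?_⟩
  filter_upwards [eventually_mem_nhdsWithin, nhdsWithin_le_nhds hvu, hst] with x hx hvux hux
  refine ⟨hux, fun hxy => hx.2 ?_⟩
  rw [← hvux, eq_of_mem_singleton hxy, hvy₀]
  rfl

theorem isBigO_comp_sub_rpow {f u : ℝ → ℝ} {s t : Set ℝ} {x₀ y₀ α : ℝ} (hα : 0 ≤ α)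
    (hf : (fun y => f y - f y₀) =O[𝓝[t \ {y₀}] y₀] fun y => |y - y₀| ^ α)
    (hu : Tendsto u (𝓝[s \ {x₀}] x₀) (𝓝[t \ {y₀}] y₀))
    (hu_lip : (fun x => u x - y₀) =O[𝓝[s \ {x₀}] x₀] fun x => x - x₀) :
    (fun x => f (u x) - f y₀) =O[𝓝[s \ {x₀}] x₀] fun x => |x - x₀| ^ α :=
  (hf.comp_tendsto hu).trans <|
    hu_lip.norm_norm.rpow hα (Eventually.of_forall fun _ => abs_nonneg _)

theorem strictHolderAt_comp_of_deriv_ne_zero_general (I J : Set ℝ)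
    (u : ℝ → ℝ) (hu : ContDiffOn ℝ 1 u J) (huJI : MapsTo u J I)
    (x₀ : ℝ) (hx₀ : x₀ ∈ interior J) (α : ℝ) (hα : 0 < α) (f : ℝ → ℝ)
    (hf : StrictHolderAt f I α (u x₀)) (hu' : deriv u x₀ ≠ 0) :
    StrictHolderAt (f ∘ u) J α x₀ := by
  have hJ : J ∈ 𝓝 x₀ := mem_interior_iff_mem_nhds.mp hx₀
  have hu_strict : HasStrictDerivAt u (deriv u x₀) x₀ :=
    (hu.contDiffAt hJ).hasStrictDerivAt one_ne_zero
  set g := hu_strict.localInverse u _ x₀ hu'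
  have hgu : ∀ᶠ x in 𝓝 x₀, g (u x) = x := hu_strict.eventually_left_inverse hu'
  have hug : ∀ᶠ y in 𝓝 (u x₀), u (g y) = y := hu_strict.eventually_right_inverse hu'
  have hgx₀ : g (u x₀) = x₀ := hgu.self_of_nhds
  have hg_deriv : HasDerivAt g (deriv u x₀)⁻¹ (u x₀) :=
    (hu_strict.to_localInverse hu').hasDerivAt
  have hg_cont : Tendsto g (𝓝 (u x₀)) (𝓝 x₀) := by
    simpa only [hgx₀] using hg_deriv.continuousAt.tendsto
  have hu_punct : Tendsto u (𝓝[J \ {x₀}] x₀) (𝓝[I \ {u x₀}] (u x₀)) :=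
    tendsto_nhdsWithin_diff_singleton_of_leftInverse hu_strict.hasDerivAt.continuousAt hgu
      hgx₀ (eventually_mem_nhdsWithin.mono fun x hx => huJI hx.1)
  have hg_punct : Tendsto g (𝓝[I \ {u x₀}] (u x₀)) (𝓝[J \ {x₀}] x₀) :=
    tendsto_nhdsWithin_diff_singleton_of_leftInverse hg_cont hug rfl
      (nhdsWithin_le_nhds (hg_cont.eventually_mem hJ))
  rw [strictHolderAt_iff_isBigO] at hf ⊢
  refine ⟨?_, fun β hβ hfu => hf.2 β hβ ?_⟩
  · exact isBigO_comp_sub_rpow (f := f) hα.le hf.1 hu_punct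
      (hu_strict.hasDerivAt.isBigO_sub.mono nhdsWithin_le_nhds)
  · have hg_lip : (fun y => g y - x₀) =O[𝓝[I \ {u x₀}] (u x₀)] fun y => y - u x₀ := by
      simpa only [hgx₀] using hg_deriv.isBigO_sub.mono nhdsWithin_le_nhds
    refine (isBigO_comp_sub_rpow (hα.trans hβ).le hfu hg_punct hg_lip).congr' ?_ .rfl
    filter_upwards [nhdsWithin_le_nhds hug] with y hy
    simp only [Function.comp_apply, hy]

/-- If `u : J → I` is `C¹`, `x₀` is interior to `J`, `f` is strictly `C^{0,α}` at
`u x₀` (relative to `I`), and `u' x₀ ≠ 0`, then `f ∘ u` is strictly `C^{0,α}` at `x₀`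
(relative to `J`). -/
theorem strictHolderAt_comp_of_deriv_ne_zero (I J : Set ℝ) (hI : I.OrdConnected)
    (hJ : J.OrdConnected) (u : ℝ → ℝ) (hu : ContDiffOn ℝ 1 u J) (huJI : MapsTo u J I)
    (x₀ : ℝ) (hx₀ : x₀ ∈ interior J) (α : ℝ) (hα : 0 < α) (f : ℝ → ℝ)
    (hf : StrictHolderAt f I α (u x₀)) (hu' : deriv u x₀ ≠ 0) :
    StrictHolderAt (f ∘ u) J α x₀ :=
  strictHolderAt_comp_of_deriv_ne_zero_general I J u hu huJI x₀ hx₀ α hα f hf hu'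
end

section
/- Let I and J be intervals of ℝ, let u : J → I be a C¹ function, let x₀ be an interior point of J, and let f : I → ℝ be strictly C^{0,α} at u(x₀). Suppose moreover that for some γ ∈ (0,1] and ρ ≥ 0 one has |u′(x) − u′(y)| ≤ ρ|x − y|^γ for all x, y ∈ J, that α > 1/(1+γ), and that u′(x₀) = 0. Then f∘u is differentiable at x₀ and (f∘u)′(x₀) = 0. -/
open Set Filter Topology

/-!
Since `u' x₀ = 0` and `u'` is `γ`-Hölder, the mean value theorem gives
`|u x - u x₀| ≤ ρ |x - x₀|^(1+γ)`. Feeding this into the `α`-Hölder bound of `f` at `u x₀`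
yields `|f (u x) - f (u x₀)| = O(|x - x₀|^((1+γ)α))`, and `(1+γ)α > 1` makes this `o(x - x₀)`.
-/

open Asymptotics

theorem isLittleO_abs_sub_rpow_sub (x₀ : ℝ) {p : ℝ} (hp : 1 < p) :
    (fun x => |x - x₀| ^ p) =o[𝓝 x₀] fun x => x - x₀ := by
  have hsmall : (fun x => |x - x₀| ^ (p - 1)) =o[𝓝 x₀] fun _ => (1 : ℝ) := by
    refine isLittleO_one_iff ℝ |>.2 ?_
    have hcont : Continuous fun x => |x - x₀| ^ (p - 1) :=
      (continuous_id.sub continuous_const).abs.rpow_const fun _ => Or.inr (by linarith)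
    simpa [Real.zero_rpow (by linarith : p - 1 ≠ 0)] using hcont.tendsto x₀
  refine (hsmall.mul_isBigO (isBigO_refl (fun x => x - x₀) _).abs_left).congr (fun x => ?_)
    (fun x => one_mul _)
  rw [← Real.rpow_add_one' (abs_nonneg _) (by linarith), sub_add_cancel]

theorem hasDerivAt_zero_of_isBigO_rpow {F : Type*} [NormedAddCommGroup F] [NormedSpace ℝ F]
    {g : ℝ → F} {x₀ p : ℝ} (hp : 1 < p)
    (h : (fun x => g x - g x₀) =O[𝓝 x₀] fun x => |x - x₀| ^ p) : HasDerivAt g 0 x₀ := by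
  rw [hasDerivAt_iff_isLittleO]
  simpa using h.trans_isLittleO (isLittleO_abs_sub_rpow_sub x₀ hp)

theorem StrictHolderAt.isBigO_sub {f : ℝ → ℝ} {I : Set ℝ} {α y₀ : ℝ}
    (hf : StrictHolderAt f I α y₀) :
    (fun y => f y - f y₀) =O[𝓝[I] y₀] fun y => |y - y₀| ^ α := by
  obtain ⟨⟨M, hM⟩, -⟩ := hf
  refine .of_bound (max M 0) ?_
  filter_upwards [nhdsWithin_le_nhds (eventually_nhdsWithin_iff.1 hM), self_mem_nhdsWithin]
    with y hy hyI
  rw [Real.norm_eq_abs, Real.norm_of_nonneg (by positivity)]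
  rcases eq_or_ne y y₀ with rfl | hne
  · simp only [sub_self, abs_zero]
    positivity
  · have hpos : 0 < |y - y₀| ^ α := Real.rpow_pos_of_pos (abs_pos.2 (sub_ne_zero.2 hne)) α
    calc |f y - f y₀| ≤ M * |y - y₀| ^ α := (div_le_iff₀ hpos).1 (hy ⟨hyI, hne⟩)
      _ ≤ max M 0 * |y - y₀| ^ α := by gcongr; exact le_max_left _ _

theorem abs_sub_le_mul_abs_sub_rpow_of_abs_derivWithin_le {u : ℝ → ℝ} {J : Set ℝ}
    (hJ : J.OrdConnected) (hu : DifferentiableOn ℝ u J) {x₀ ρ γ : ℝ} (hx₀ : x₀ ∈ J)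
    (hρ : 0 ≤ ρ) (hγ : 0 ≤ γ) (hderiv : ∀ t ∈ J, |derivWithin u J t| ≤ ρ * |t - x₀| ^ γ)
    {x : ℝ} (hx : x ∈ J) : |u x - u x₀| ≤ ρ * |x - x₀| ^ (γ + 1) := by
  have hsub : uIcc x₀ x ⊆ J := hJ.uIcc_subset hx₀ hx
  have hbound : ∀ t ∈ uIcc x₀ x, ‖derivWithin u J t‖ ≤ ρ * |x - x₀| ^ γ := fun t ht =>
    (hderiv t (hsub ht)).trans <| mul_le_mul_of_nonneg_left
      (Real.rpow_le_rpow (abs_nonneg _) (abs_sub_left_of_mem_uIcc ht) hγ) hρ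
  calc |u x - u x₀| ≤ ρ * |x - x₀| ^ γ * ‖x - x₀‖ :=
        (convex_uIcc x₀ x).norm_image_sub_le_of_norm_hasDerivWithin_le
          (fun t ht => (hu t (hsub ht)).hasDerivWithinAt.mono hsub) hbound
          left_mem_uIcc right_mem_uIcc
    _ = ρ * |x - x₀| ^ (γ + 1) := by
        rw [Real.norm_eq_abs, mul_assoc, Real.rpow_add_one' (abs_nonneg _) (by linarith)]

theorem hasDerivAt_comp_of_deriv_eq_zero_general (I J : Set ℝ)
    (hJ : J.OrdConnected) (u : ℝ → ℝ) (hu : ContDiffOn ℝ 1 u J) (huJI : MapsTo u J I)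
    (x₀ : ℝ) (hx₀ : x₀ ∈ interior J) (α γ ρ : ℝ) (hγ : γ ∈ Ioc (0 : ℝ) 1) (hρ : 0 ≤ ρ)
    (hHold : ∀ x ∈ J, ∀ y ∈ J, |derivWithin u J x - derivWithin u J y| ≤ ρ * |x - y| ^ γ)
    (hα : 1 / (1 + γ) < α) (f : ℝ → ℝ) (hf : StrictHolderAt f I α (u x₀))
    (hu0 : derivWithin u J x₀ = 0) :
    HasDerivAt (f ∘ u) 0 x₀ := by
  obtain ⟨hγ0, -⟩ := hγ
  have hx₀J : x₀ ∈ J := interior_subset hx₀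
  have hJx₀ : J ∈ 𝓝 x₀ := mem_interior_iff_mem_nhds.1 hx₀
  have hu_sub : (fun x => u x - u x₀) =O[𝓝 x₀] fun x => |x - x₀| ^ (γ + 1) := by
    refine .of_bound ρ ?_
    filter_upwards [hJx₀] with x hx
    rw [Real.norm_eq_abs, Real.norm_of_nonneg (by positivity)]
    refine abs_sub_le_mul_abs_sub_rpow_of_abs_derivWithin_le hJ (hu.differentiableOn one_ne_zero)
      hx₀J hρ hγ0.le (fun t ht => ?_) hx
    simpa [hu0] using hHold t ht x₀ hx₀J
  have hu_tendsto : Tendsto u (𝓝 x₀) (𝓝[I] (u x₀)) :=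
    tendsto_nhdsWithin_iff.2 ⟨(hu.continuousOn.continuousAt hJx₀).tendsto,
      mem_of_superset hJx₀ huJI⟩
  have hα0 : 0 ≤ α := (one_div_pos.2 (by linarith)).le.trans hα.le
  have hκ : 1 < (γ + 1) * α := by
    rwa [add_comm, ← div_lt_iff₀' (by linarith)]
  refine hasDerivAt_zero_of_isBigO_rpow hκ ?_
  calc (fun x => (f ∘ u) x - (f ∘ u) x₀) =O[𝓝 x₀] fun x => |u x - u x₀| ^ α :=
        hf.isBigO_sub.comp_tendsto hu_tendsto
    _ =O[𝓝 x₀] fun x => (|x - x₀| ^ (γ + 1)) ^ α :=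
        hu_sub.norm_left.rpow hα0 (.of_forall fun _ => by positivity)
    _ = fun x => |x - x₀| ^ ((γ + 1) * α) := by
        simp only [← Real.rpow_mul (abs_nonneg _)]

/-- If `u : J → I` is `C¹` with `γ`-Hölder derivative (constant `ρ`), `x₀` is interior
to `J`, `f` is strictly `C^{0,α}` at `u x₀` with `α > 1/(1+γ)`, and `u' x₀ = 0`, then
`f ∘ u` is differentiable at `x₀` with `(f ∘ u)' x₀ = 0`. -/
theorem hasDerivAt_comp_of_deriv_eq_zero (I J : Set ℝ) (hI : I.OrdConnected)
    (hJ : J.OrdConnected) (u : ℝ → ℝ) (hu : ContDiffOn ℝ 1 u J) (huJI : MapsTo u J I)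
    (x₀ : ℝ) (hx₀ : x₀ ∈ interior J) (α γ ρ : ℝ) (hγ : γ ∈ Ioc (0 : ℝ) 1) (hρ : 0 ≤ ρ)
    (hHold : ∀ x ∈ J, ∀ y ∈ J, |derivWithin u J x - derivWithin u J y| ≤ ρ * |x - y| ^ γ)
    (hα : 1 / (1 + γ) < α) (f : ℝ → ℝ) (hf : StrictHolderAt f I α (u x₀))
    (hu0 : derivWithin u J x₀ = 0) :
    HasDerivAt (f ∘ u) 0 x₀ :=
  hasDerivAt_comp_of_deriv_eq_zero_general I J hJ u hu huJI x₀ hx₀ α γ ρ hγ hρ hHold hα f hf hu0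
end

section
/- Let γ ∈ (0,1] and let α₁, α₂, …, α_d be distinct numbers in the interval (1/(1+γ), 1). For each j ∈ {1,…,d} let f_j : ℝ → ℝ be continuous and strictly C^{0,α_j} at every point of ℝ, and define f : ℝ^d → ℝ by f(x₁, …, x_d) = Σ_{j=1}^d f_j(x_j). Then f is continuous and, for every C¹ curve c : [a,b] → ℝ^d of unit speed (‖c′(s)‖ = 1 for all s) satisfying ‖c′(s₂) − c′(s₁)‖ ≤ ρ|s₂ − s₁|^γ for all s₁, s₂ ∈ [a,b] (for some ρ ≥ 0), the composition f∘c is not differentiable at any point of (a,b). -/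
/-!
Let `v = c'(s₀)` and let `j₀` minimise `α j` among the coordinates with `v j ≠ 0`. Near `s₀`
every other summand `f j (c s j)` is `O(|s - s₀| ^ β)` for some `β > α j₀`: if `v j ≠ 0` then
`c · j` is Lipschitz and the exponent is `α j > α j₀`; if `v j = 0`, the Hölder bound on `c'`
gives `c s j - c s₀ j = O(|s - s₀| ^ (1 + γ))` and the exponent is `(1 + γ) α j > 1`. If `f ∘ c`
were differentiable at `s₀`, its increment would be `O(|s - s₀|)`, hence the increment of
`f j₀ (c s j₀)` would be `O(|s - s₀| ^ β)`. As `c · j₀` has nonzero strict derivative at `s₀`,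
it maps neighbourhoods of `s₀` onto neighbourhoods of `c s₀ j₀` with
`|s - s₀| = O(|c s j₀ - c s₀ j₀|)`, so `f j₀` would be `C^{0,β}` at `c s₀ j₀`, contradicting
strictness.
-/

open Set Filter Topology Asymptotics

theorem isBigO_abs_sub_rpow_of_le {x₀ p q : ℝ} (hpq : p ≤ q) (hq : q ≠ 0) :
    (fun x => |x - x₀| ^ q) =O[𝓝 x₀] fun x => |x - x₀| ^ p := by
  have hdist : Tendsto (fun x => |x - x₀|) (𝓝 x₀) (𝓝[≥] 0) :=
    tendsto_nhdsWithin_iff.2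
      ⟨(continuous_abs.comp (continuous_sub_right x₀)).tendsto' x₀ 0 (by simp),
        Eventually.of_forall fun x => mem_Ici.2 (abs_nonneg (x - x₀))⟩
  exact (IsBigO.rpow_rpow_nhdsGE_zero_of_le hpq hq).comp_tendsto hdist

theorem DifferentiableAt.isBigO_sub_abs_rpow_one {E : Type*} [NormedAddCommGroup E]
    [NormedSpace ℝ E]
    {f : ℝ → E} {x₀ : ℝ} (hf : DifferentiableAt ℝ f x₀) :
    (fun x => f x - f x₀) =O[𝓝 x₀] fun x => |x - x₀| ^ (1 : ℝ) := by
  simpa only [Real.rpow_one, isBigO_abs_right] using hf.hasDerivAt.isBigO_sub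

theorem isBigO_sub_rpow_of_comp_hasStrictDerivAt {F h : ℝ → ℝ} {w s₀ β : ℝ}
    (hh : HasStrictDerivAt h w s₀) (hw : w ≠ 0) (hβ : 0 ≤ β)
    (hF : (fun s => F (h s) - F (h s₀)) =O[𝓝 s₀] fun s => |s - s₀| ^ β) :
    (fun x => F x - F (h s₀)) =O[𝓝 (h s₀)] fun x => |x - h s₀| ^ β := by
  rw [← hh.map_nhds_eq hw, isBigO_map]
  have hrev := ((HasDerivAtFilter.isTheta_sub hh.hasDerivAt hw).isBigO_symm).comp_tendsto
    (tendsto_id.prodMk (tendsto_const_pure (b := s₀)))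
  refine hF.trans ?_
  simpa only [Function.comp_def, id] using
    (isBigO_abs_abs.2 hrev).rpow hβ (Eventually.of_forall fun s => by positivity)

theorem StrictHolderAt.isBigO {f : ℝ → ℝ} {I : Set ℝ} {α x₀ : ℝ} (hf : StrictHolderAt f I α x₀) :
    (fun x => f x - f x₀) =O[𝓝[I] x₀] fun x => |x - x₀| ^ α := by
  obtain ⟨M, hM⟩ := hf.1
  refine IsBigO.of_bound (max M 0) ?_
  rw [eventually_nhdsWithin_iff] at hM ⊢
  filter_upwards [hM] with x hx hxI
  rcases eq_or_ne x x₀ with rfl | hne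
  · simp only [sub_self, norm_zero]
    positivity
  · have hpos : 0 < |x - x₀| ^ α := Real.rpow_pos_of_pos (abs_pos.2 (sub_ne_zero.2 hne)) _
    rw [Real.norm_eq_abs, Real.norm_eq_abs, abs_of_pos hpos]
    exact ((div_le_iff₀ hpos).1 (hx ⟨hxI, hne⟩)).trans
      (mul_le_mul_of_nonneg_right (le_max_left _ _) hpos.le)

theorem StrictHolderAt.not_isBigO {f : ℝ → ℝ} {I : Set ℝ} {α β x₀ : ℝ}
    (hf : StrictHolderAt f I α x₀) (hαβ : α < β) :
    ¬ (fun x => f x - f x₀) =O[𝓝[I] x₀] fun x => |x - x₀| ^ β := by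
  intro hO
  obtain ⟨C, hC⟩ := hO.bound
  have hC' := (hC.filter_mono (nhdsWithin_mono x₀ (sdiff_subset : I \ {x₀} ⊆ I))).and
    self_mem_nhdsWithin
  obtain ⟨x, hlt, hle, -, hne⟩ := ((hf.2 β hαβ C).and_eventually hC').exists
  have hpos : 0 < |x - x₀| ^ β := Real.rpow_pos_of_pos (abs_pos.2 (sub_ne_zero.2 hne)) _
  rw [Real.norm_eq_abs, Real.norm_eq_abs, abs_of_pos hpos] at hle
  exact hlt.not_ge ((div_le_iff₀ hpos).2 hle)

theorem StrictHolderAt.isBigO_comp {f g : ℝ → ℝ} {s₀ p α : ℝ}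
    (hf : StrictHolderAt f univ α (g s₀)) (hα : 0 ≤ α)
    (hg : (fun s => g s - g s₀) =O[𝓝 s₀] fun s => |s - s₀| ^ p) (hgc : ContinuousAt g s₀) :
    (fun s => f (g s) - f (g s₀)) =O[𝓝 s₀] fun s => |s - s₀| ^ (p * α) := by
  have hfO := hf.isBigO
  rw [nhdsWithin_univ] at hfO
  refine (hfO.comp_tendsto hgc).trans ?_
  have := (isBigO_abs_left.2 hg).rpow hα (Eventually.of_forall fun s => by positivity)
  simpa only [Function.comp_def, ← Real.rpow_mul (abs_nonneg _)] using this

theorem StrictHolderAt.isBigO_comp_of_hasDerivAt {f g : ℝ → ℝ} {w s₀ α : ℝ}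
    (hf : StrictHolderAt f univ α (g s₀)) (hα : 0 ≤ α) (hg : HasDerivAt g w s₀) :
    (fun s => f (g s) - f (g s₀)) =O[𝓝 s₀] fun s => |s - s₀| ^ α := by
  simpa only [one_mul] using
    hf.isBigO_comp hα hg.differentiableAt.isBigO_sub_abs_rpow_one hg.continuousAt

theorem StrictHolderAt.not_isBigO_comp {f h : ℝ → ℝ} {w s₀ α β : ℝ}
    (hf : StrictHolderAt f univ α (h s₀)) (hh : HasStrictDerivAt h w s₀) (hw : w ≠ 0)
    (hα : 0 ≤ α) (hαβ : α < β) :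
    ¬ (fun s => f (h s) - f (h s₀)) =O[𝓝 s₀] fun s => |s - s₀| ^ β := fun hO =>
  hf.not_isBigO hαβ <| nhdsWithin_univ (h s₀) ▸
    isBigO_sub_rpow_of_comp_hasStrictDerivAt hh hw (hα.trans hαβ.le) hO

theorem ContDiffOn.hasStrictDerivAt_derivWithin {E : Type*} [NormedAddCommGroup E]
    [NormedSpace ℝ E] {c : ℝ → E} {S : Set ℝ} {s₀ : ℝ} (hc : ContDiffOn ℝ 1 c S) (hS : S ∈ 𝓝 s₀) :
    HasStrictDerivAt c (derivWithin c S s₀) s₀ := by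
  rw [derivWithin_of_mem_nhds hS]
  exact (hc.contDiffAt hS).hasStrictDerivAt one_ne_zero

theorem norm_sub_sub_smul_le_of_holder_deriv {E : Type*} [NormedAddCommGroup E]
    [NormedSpace ℝ E] {c c' : ℝ → E} {S : Set ℝ} {s₀ s ρ γ : ℝ} (hS : Convex ℝ S)
    (hc : ∀ t ∈ S, HasDerivWithinAt c (c' t) S t) (hρ : 0 ≤ ρ) (hγ : 0 ≤ γ)
    (hH : ∀ t ∈ S, ‖c' t - c' s₀‖ ≤ ρ * |t - s₀| ^ γ) (hs₀ : s₀ ∈ S) (hs : s ∈ S) :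
    ‖c s - c s₀ - (s - s₀) • c' s₀‖ ≤ ρ * |s - s₀| ^ γ * |s - s₀| := by
  have hsub : uIcc s₀ s ⊆ S := by
    rw [← segment_eq_uIcc]
    exact hS.segment_subset hs₀ hs
  have hder : ∀ t ∈ uIcc s₀ s, HasDerivWithinAt (fun u => c u - u • c' s₀)
      (c' t - c' s₀) (uIcc s₀ s) t := fun t ht => by
    simpa only [one_smul, id_eq] using
      ((hc t (hsub ht)).mono hsub).fun_sub ((hasDerivWithinAt_id t _).smul_const (c' s₀))
  have hbound : ∀ t ∈ uIcc s₀ s, ‖c' t - c' s₀‖ ≤ ρ * |s - s₀| ^ γ := fun t ht =>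
    (hH t (hsub ht)).trans (mul_le_mul_of_nonneg_left
      (Real.rpow_le_rpow (abs_nonneg _) (abs_sub_left_of_mem_uIcc ht) hγ) hρ)
  have := (convex_uIcc s₀ s).norm_image_sub_le_of_norm_hasDerivWithin_le hder hbound
    left_mem_uIcc right_mem_uIcc
  rwa [sub_sub_sub_comm, ← sub_smul, Real.norm_eq_abs] at this

theorem isBigO_sub_sub_smul_of_holder_deriv {E : Type*} [NormedAddCommGroup E]
    [NormedSpace ℝ E] {c c' : ℝ → E} {S : Set ℝ} {s₀ ρ γ : ℝ} (hS : Convex ℝ S)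
    (hc : ∀ t ∈ S, HasDerivWithinAt c (c' t) S t) (hρ : 0 ≤ ρ) (hγ : 0 ≤ γ)
    (hH : ∀ t ∈ S, ‖c' t - c' s₀‖ ≤ ρ * |t - s₀| ^ γ) (hs₀ : s₀ ∈ S) :
    (fun s => c s - c s₀ - (s - s₀) • c' s₀) =O[𝓝[S] s₀] fun s => |s - s₀| ^ (1 + γ) := by
  refine IsBigO.of_bound ρ ?_
  filter_upwards [self_mem_nhdsWithin] with s hs
  rw [Real.norm_of_nonneg (by positivity), Real.rpow_one_add' (abs_nonneg _) (by positivity),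
    mul_comm |s - s₀|, ← mul_assoc]
  exact norm_sub_sub_smul_le_of_holder_deriv hS hc hρ hγ hH hs₀ hs

theorem isBigO_clm_comp_sub_of_holder_derivWithin {E F : Type*} [NormedAddCommGroup E]
    [NormedSpace ℝ E] [NormedAddCommGroup F] [NormedSpace ℝ F] {c : ℝ → E} {S : Set ℝ}
    {s₀ ρ γ : ℝ} (hS : Convex ℝ S) (hSs₀ : S ∈ 𝓝 s₀) (hc : DifferentiableOn ℝ c S)
    (hρ : 0 ≤ ρ) (hγ : 0 ≤ γ)
    (hH : ∀ t ∈ S, ‖derivWithin c S t - derivWithin c S s₀‖ ≤ ρ * |t - s₀| ^ γ)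
    (L : E →L[ℝ] F) (hL : L (derivWithin c S s₀) = 0) :
    (fun s => L (c s) - L (c s₀)) =O[𝓝 s₀] fun s => |s - s₀| ^ (1 + γ) := by
  have h := isBigO_sub_sub_smul_of_holder_deriv hS (fun t ht => (hc t ht).hasDerivWithinAt)
    hρ hγ hH (mem_of_mem_nhds hSs₀)
  rw [nhdsWithin_eq_nhds.2 hSs₀] at h
  simpa only [map_sub, map_smul, hL, smul_zero, sub_zero] using (L.isBigO_comp _ _).trans h

theorem not_differentiableAt_sum_of_dominant_term {ι : Type*} [Fintype ι] {u : ι → ℝ → ℝ}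
    {s₀ β₀ : ℝ} (i₀ : ι) (hβ₀ : 0 ≤ β₀) (hβ₀_lt_one : β₀ < 1)
    (hdom : ∀ i ≠ i₀, ∃ e > β₀, (fun s => u i s - u i s₀) =O[𝓝 s₀] fun s => |s - s₀| ^ e)
    (hrough : ∀ β > β₀, ¬ (fun s => u i₀ s - u i₀ s₀) =O[𝓝 s₀] fun s => |s - s₀| ^ β) :
    ¬ DifferentiableAt ℝ (fun s => ∑ i, u i s) s₀ := by
  classical
  intro hdiff
  have hsum : ∀ᶠ β in 𝓝[>] β₀,
      (fun s => ∑ i, u i s - ∑ i, u i s₀) =O[𝓝 s₀] fun s => |s - s₀| ^ β := by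
    filter_upwards [nhdsWithin_le_nhds (eventually_le_nhds hβ₀_lt_one)] with β hβ
    exact hdiff.isBigO_sub_abs_rpow_one.trans (isBigO_abs_sub_rpow_of_le hβ one_ne_zero)
  have hrest : ∀ i ∈ Finset.univ.erase i₀, ∀ᶠ β in 𝓝[>] β₀,
      (fun s => u i s - u i s₀) =O[𝓝 s₀] fun s => |s - s₀| ^ β := by
    intro i hi
    obtain ⟨e, he, hO⟩ := hdom i (Finset.ne_of_mem_erase hi)
    filter_upwards [nhdsWithin_le_nhds (eventually_le_nhds he)] with β hβ
    exact hO.trans (isBigO_abs_sub_rpow_of_le hβ (hβ₀.trans_lt he).ne')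
  obtain ⟨β, hβ, hsumβ, hrestβ⟩ := (eventually_mem_nhdsWithin.and
    (hsum.and ((Finset.eventually_all _).2 hrest))).exists
  have hsplit : (fun s => u i₀ s - u i₀ s₀) = fun s =>
      (∑ i, u i s - ∑ i, u i s₀) - ∑ i ∈ Finset.univ.erase i₀, (u i s - u i s₀) := by
    funext s
    rw [← Finset.add_sum_erase _ _ (Finset.mem_univ i₀),
      ← Finset.add_sum_erase _ _ (Finset.mem_univ i₀), Finset.sum_sub_distrib]
    ring
  exact hrough β hβ (hsplit ▸ hsumβ.sub (IsBigO.fun_sum hrestβ))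

/-- Let `γ ∈ (0,1]` and let `α₁, …, α_d` be distinct numbers in `(1/(1+γ), 1)`. If each
`f_j : ℝ → ℝ` is continuous and strictly `C^{0,α_j}` at every point, then
`f (x₁, …, x_d) = Σ_j f_j (x_j)` is continuous and, for every unit-speed `C^{1,γ}` curve
`c : [a,b] → ℝ^d`, the composition `f ∘ c` is differentiable at no point of `(a,b)`. -/
theorem sum_strictHolder_nowhere_differentiable_along_curves {d : ℕ} (γ : ℝ)
    (hγ : γ ∈ Ioc (0 : ℝ) 1) (α : Fin d → ℝ) (hinj : Function.Injective α)
    (hα : ∀ j, α j ∈ Ioo (1 / (1 + γ)) 1) (f : Fin d → ℝ → ℝ)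
    (hfc : ∀ j, Continuous (f j)) (hf : ∀ j x₀, StrictHolderAt (f j) univ (α j) x₀)
    (a b : ℝ) (c : ℝ → EuclideanSpace ℝ (Fin d)) (hc : ContDiffOn ℝ 1 c (Icc a b))
    (hunit : ∀ s ∈ Icc a b, ‖derivWithin c (Icc a b) s‖ = 1) (ρ : ℝ) (hρ : 0 ≤ ρ)
    (hH : ∀ s₁ ∈ Icc a b, ∀ s₂ ∈ Icc a b,
      ‖derivWithin c (Icc a b) s₂ - derivWithin c (Icc a b) s₁‖ ≤ ρ * |s₂ - s₁| ^ γ) :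
    Continuous (fun x : EuclideanSpace ℝ (Fin d) => ∑ j, f j (x j)) ∧
    ∀ s₀ ∈ Ioo a b,
      ¬ DifferentiableWithinAt ℝ
        ((fun x : EuclideanSpace ℝ (Fin d) => ∑ j, f j (x j)) ∘ c) (Icc a b) s₀ := by
  have hα_pos : ∀ j, 0 < α j := fun j => (one_div_pos.2 (by linarith [hγ.1])).trans (hα j).1
  have hα_lt : ∀ j k, α k < (1 + γ) * α j := fun j k =>
    (hα k).2.trans ((div_lt_iff₀' (by linarith [hγ.1])).1 (hα j).1)
  refine ⟨continuous_finsetSum _ fun j _ => (hfc j).comp (EuclideanSpace.proj j).continuous,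
    fun s₀ hs₀ hdiff => ?_⟩
  have hs₀' : s₀ ∈ Icc a b := Ioo_subset_Icc_self hs₀
  have hIcc : Icc a b ∈ 𝓝 s₀ := Icc_mem_nhds hs₀.1 hs₀.2
  set v := derivWithin c (Icc a b) s₀
  have hcoord : ∀ j, HasStrictDerivAt (fun s => c s j) (v j) s₀ := fun j =>
    (EuclideanSpace.proj (𝕜 := ℝ) j).hasStrictFDerivAt.comp_hasStrictDerivAt s₀
      (hc.hasStrictDerivAt_derivWithin hIcc)
  have hv : v ≠ 0 := norm_ne_zero_iff.1 (by rw [hunit s₀ hs₀']; exact one_ne_zero)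
  obtain ⟨j₀, hj₀, hmin⟩ := Set.exists_min_image _ α (Set.toFinite _)
    (Function.support_nonempty_iff.2 fun h => hv (by ext j; exact congrFun h j))
  refine not_differentiableAt_sum_of_dominant_term (u := fun j s => f j (c s j)) j₀
    (hα_pos j₀).le (hα j₀).2 (fun j hj => ?_)
    (fun β hβ => (hf j₀ _).not_isBigO_comp (hcoord j₀) hj₀ (hα_pos j₀).le hβ)
    (hdiff.differentiableAt hIcc)
  by_cases hvj : v j = 0
  · exact ⟨(1 + γ) * α j, hα_lt j j₀, (hf j _).isBigO_comp (hα_pos j).le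
      (isBigO_clm_comp_sub_of_holder_derivWithin (convex_Icc a b) hIcc
        (hc.differentiableOn one_ne_zero) hρ hγ.1.le (hH s₀ hs₀') (EuclideanSpace.proj j) hvj)
      (hcoord j).hasDerivAt.continuousAt⟩
  · exact ⟨α j, (hmin j hvj).lt_of_ne fun h => hj (hinj h).symm,
      (hf j _).isBigO_comp_of_hasDerivAt (hα_pos j).le (hcoord j).hasDerivAt⟩
end

section
/- Let U be a bounded open set in ℝ^d, let n be a positive integer, and let γ ∈ (0,1]. Then the set 𝒞_n^γ(U) is compact in the C¹ topology; equivalently, every sequence ⟨c_ℓ⟩ of curves in 𝒞_n^γ(U) has a subsequence ⟨c_{ℓ_k}⟩ and a C¹ curve c ∈ 𝒞_n^γ(U) such that c_{ℓ_k} → c and c′_{ℓ_k} → c′ uniformly on [−1/n, 1/n]. -/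
/-!
The pairs `(c, c')` for `c ∈ 𝒞_n^γ(U)` form an equicontinuous family on `[-1/n, 1/n]`: `c` is
1-Lipschitz because it has unit speed, and `c'` is `γ`-Hölder with constant `n`. They take values
in the compact set `closure U × S¹`, so by Arzelà–Ascoli a subsequence converges uniformly, with
limit `(c₀, v)`. Passing to the limit in `c(t) = c(-1/n) + ∫_{-1/n}^t c'` shows that `c₀` is `C¹`
with `c₀' = v`. Finally every condition defining `𝒞_n^γ(U)` is closed: for the last one, a limit
of points of `K_n` lies in `closure U` at distance `≥ 1/n > 0` from `∂U`, hence in `U`.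
-/

open Set Filter Topology

/-- `K_n`: the points of `U` at distance at least `1/n` from the boundary of `U`. -/
def Kset {d : ℕ} (U : Set (EuclideanSpace ℝ (Fin d))) (n : ℕ) :
    Set (EuclideanSpace ℝ (Fin d)) :=
  {u ∈ U | ∀ x ∈ frontier U, 1 / (n : ℝ) ≤ ‖u - x‖}

/-- `𝒞_n^γ(U)`: unit-speed `C¹` curves `c : [-1/n, 1/n] → U` whose derivative satisfies
`‖c'(s₂) - c'(s₁)‖ ≤ n |s₂ - s₁|^γ` and whose image lies in `K_n`. -/
def CurveClass {d : ℕ} (U : Set (EuclideanSpace ℝ (Fin d))) (n : ℕ) (γ : ℝ) :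
    Set (ℝ → EuclideanSpace ℝ (Fin d)) :=
  {c | ContDiffOn ℝ 1 c (Icc (-(1 / (n : ℝ))) (1 / n)) ∧
    (∀ s ∈ Icc (-(1 / (n : ℝ))) (1 / n),
      ‖derivWithin c (Icc (-(1 / (n : ℝ))) (1 / n)) s‖ = 1) ∧
    (∀ s₁ ∈ Icc (-(1 / (n : ℝ))) (1 / n), ∀ s₂ ∈ Icc (-(1 / (n : ℝ))) (1 / n),
      ‖derivWithin c (Icc (-(1 / (n : ℝ))) (1 / n)) s₂ -
          derivWithin c (Icc (-(1 / (n : ℝ))) (1 / n)) s₁‖ ≤ (n : ℝ) * |s₂ - s₁| ^ γ) ∧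
    ∀ s ∈ Icc (-(1 / (n : ℝ))) (1 / n), c s ∈ Kset U n}

open Classical in
/-- Extend a continuous function on `closure U` to all of `ℝ^d` by zero. -/
noncomputable def extendCl {d : ℕ} (U : Set (EuclideanSpace ℝ (Fin d)))
    (f : C(closure U, ℝ)) : EuclideanSpace ℝ (Fin d) → ℝ :=
  fun x => if hx : x ∈ closure U then f ⟨x, hx⟩ else 0

/-- `ℱ_n^γ(U)`: those `f ∈ C(U̅)` such that for some curve `c ∈ 𝒞_n^γ(U)` one has
`|f (c s) - f (c 0)| ≤ n |s|` for all `s ∈ [-1/n, 1/n]`. -/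
def Fclass {d : ℕ} (U : Set (EuclideanSpace ℝ (Fin d))) (n : ℕ) (γ : ℝ) :
    Set C(closure U, ℝ) :=
  {f | ∃ c ∈ CurveClass U n γ, ∀ s ∈ Icc (-(1 / (n : ℝ))) (1 / n),
    |extendCl U f (c s) - extendCl U f (c 0)| ≤ (n : ℝ) * |s|}

open scoped BoundedContinuousFunction

theorem IsCompact.exists_strictMono_tendstoUniformlyOn {X α : Type*} [TopologicalSpace X]
    [MetricSpace α] {S : Set X} (hS : IsCompact S) {K : Set α} (hK : IsCompact K)
    {F : ℕ → X → α} (hF : EquicontinuousOn F S) (hFK : ∀ k, MapsTo (F k) S K) :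
    ∃ φ : ℕ → ℕ, StrictMono φ ∧ ∃ g : X → α,
      TendstoUniformlyOn (fun k => F (φ k)) g atTop S := by
  classical
  have := isCompact_iff_compactSpace.1 hS
  have hF' : Equicontinuous (S.domRestrict ∘ F) := (equicontinuous_restrict_iff F).2 hF
  let B : ℕ → S →ᵇ α := fun k =>
    BoundedContinuousFunction.mkOfCompact ⟨S.domRestrict (F k), hF'.continuous k⟩
  have hB : Equicontinuous ((↑) : range B → S → α) := by
    rintro x U hU
    filter_upwards [hF' x U hU] with y hy
    rintro ⟨_, k, rfl⟩
    exact hy k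
  obtain ⟨h, -, φ, hφ, hlim⟩ := (BoundedContinuousFunction.arzela_ascoli K hK (range B)
    (by rintro _ x ⟨k, rfl⟩; exact hFK k x.2) hB).isSeqCompact
    (fun k => subset_closure (mem_range_self k))
  refine ⟨φ, hφ, fun x => if hx : x ∈ S then h ⟨x, hx⟩ else F 0 x, ?_⟩
  rw [tendstoUniformlyOn_iff_tendstoUniformly_comp_coe]
  convert BoundedContinuousFunction.tendsto_iff_tendstoUniformly.1 hlim using 1
  · rfl
  · funext x
    exact dif_pos x.2

section UniformLimit

variable {E : Type*} [NormedAddCommGroup E] [NormedSpace ℝ E] [CompleteSpace E] {a b : ℝ}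

theorem integral_derivWithin_Icc_eq_sub {f : ℝ → E} (hab : a < b)
    (hf : ContDiffOn ℝ 1 f (Icc a b)) {t : ℝ} (ht : t ∈ Icc a b) :
    ∫ x in a..t, derivWithin f (Icc a b) x = f t - f a := by
  refine intervalIntegral.integral_eq_sub_of_hasDeriv_right_of_le ht.1
    (hf.continuousOn.mono (Icc_subset_Icc_right ht.2)) (fun x hx => ?_) ?_
  · have hx' : Icc a b ∈ 𝓝 x := Icc_mem_nhds hx.1 (hx.2.trans_le ht.2)
    exact (((hf.differentiableOn one_ne_zero).differentiableAt hx').hasDerivAt.congr_deriv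
      (derivWithin_of_mem_nhds hx').symm).hasDerivWithinAt
  · exact ((hf.continuousOn_derivWithin (uniqueDiffOn_Icc hab) le_rfl).mono
      (Icc_subset_Icc_right ht.2)).intervalIntegrable_of_Icc ht.1

theorem contDiffOn_Icc_of_tendstoUniformlyOn_derivWithin {ι : Type*} {l : Filter ι}
    [l.NeBot] [l.IsCountablyGenerated] {f : ι → ℝ → E} {F G : ℝ → E} (hab : a < b)
    (hf : ∀ i, ContDiffOn ℝ 1 (f i) (Icc a b))
    (hfF : ∀ t ∈ Icc a b, Tendsto (fun i => f i t) l (𝓝 (F t)))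
    (hfG : TendstoUniformlyOn (fun i => derivWithin (f i) (Icc a b)) G l (Icc a b)) :
    ContDiffOn ℝ 1 F (Icc a b) ∧ EqOn (derivWithin F (Icc a b)) G (Icc a b) := by
  have hf' : ∀ i, ContinuousOn (derivWithin (f i) (Icc a b)) (Icc a b) := fun i =>
    (hf i).continuousOn_derivWithin (uniqueDiffOn_Icc hab) le_rfl
  have hG : ContinuousOn G (Icc a b) := hfG.continuousOn (Frequently.of_forall hf')
  set G' : ℝ → E := fun t => G (projIcc a b hab.le t)
  have hG' : Continuous G' := hG.comp_continuous (continuous_subtype_val.comp continuous_projIcc)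
    fun t => Subtype.mem _
  have hG'_eq : EqOn G' G (Icc a b) := fun t ht => by simp only [G', projIcc_of_mem hab.le ht]
  set H : ℝ → E := fun t => F a + ∫ x in a..t, G' x
  have hH : ∀ t, HasDerivAt H (G' t) t := fun t =>
    ((hG'.integral_hasStrictDerivAt a t).hasDerivAt).const_add _
  have hFH : EqOn F H (Icc a b) := by
    intro t ht
    have hlim : Tendsto (fun i => f i a + ∫ x in a..t, derivWithin (f i) (Icc a b) x) l
        (𝓝 (H t)) := by
      have hsub : uIcc a t ⊆ Icc a b := uIcc_subset_Icc (left_mem_Icc.2 hab.le) ht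
      refine (hfF a (left_mem_Icc.2 hab.le)).add ?_
      rw [intervalIntegral.integral_congr fun x hx => hG'_eq (hsub hx)]
      exact (hfG.mono hsub).tendsto_intervalIntegral_of_continuousOn
        (Eventually.of_forall fun i => (hf' i).mono hsub)
    refine tendsto_nhds_unique (hfF t ht) (hlim.congr fun i => ?_)
    rw [integral_derivWithin_Icc_eq_sub hab (hf i) ht, add_sub_cancel]
  refine ⟨(contDiff_one_iff_deriv.2 ⟨fun t => (hH t).differentiableAt, ?_⟩).contDiffOn.congr hFH,
    fun t ht => ?_⟩
  · simpa only [funext fun t => (hH t).deriv] using hG'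
  · rw [derivWithin_congr hFH (hFH ht), (hH t).hasDerivWithinAt.derivWithin
      (uniqueDiffOn_Icc hab t ht)]
    exact hG'_eq ht

end UniformLimit

section CurveClass

variable {d : ℕ} {U : Set (EuclideanSpace ℝ (Fin d))} {n : ℕ} {γ : ℝ}

theorem isClosed_Kset (hU : IsOpen U) (hn : 0 < n) : IsClosed (Kset U n) := by
  have hK : Kset U n = closure U ∩ ⋂ x ∈ frontier U, {u | 1 / (n : ℝ) ≤ ‖u - x‖} := by
    ext u
    simp only [Kset, mem_ofPred_eq, mem_inter_iff, mem_iInter]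
    refine ⟨fun hu => ⟨subset_closure hu.1, hu.2⟩, fun ⟨hcl, hfr⟩ => ⟨?_, hfr⟩⟩
    by_contra hu
    have hself := hfr u (hU.frontier_eq ▸ ⟨hcl, hu⟩)
    rw [sub_self, norm_zero] at hself
    exact (one_div_pos.2 (Nat.cast_pos.2 hn)).not_ge hself
  rw [hK]
  exact isClosed_closure.inter <| isClosed_biInter fun x _ =>
    isClosed_le continuous_const (continuous_id.sub continuous_const).norm

theorem lipschitzOnWith_one_of_mem_curveClass {c : ℝ → EuclideanSpace ℝ (Fin d)}
    (hc : c ∈ CurveClass U n γ) : LipschitzOnWith 1 c (Icc (-(1 / (n : ℝ))) (1 / n)) :=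
  (convex_Icc _ _).lipschitzOnWith_of_nnnorm_derivWithin_le (hc.1.differentiableOn one_ne_zero)
    fun s hs => by rw [← NNReal.coe_le_coe, coe_nnnorm, hc.2.1 s hs, NNReal.coe_one]

theorem mapsTo_closure_prod_sphere_of_mem_curveClass {c : ℝ → EuclideanSpace ℝ (Fin d)}
    (hc : c ∈ CurveClass U n γ) :
    MapsTo (fun s => (c s, derivWithin c (Icc (-(1 / (n : ℝ))) (1 / n)) s))
      (Icc (-(1 / (n : ℝ))) (1 / n)) (closure U ×ˢ Metric.sphere 0 1) := fun s hs =>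
  ⟨subset_closure (hc.2.2.2 s hs).1, mem_sphere_zero_iff_norm.2 (hc.2.1 s hs)⟩

theorem equicontinuousOn_curveClass {ι : Type*} {c : ι → ℝ → EuclideanSpace ℝ (Fin d)}
    (hγ : 0 < γ) (hc : ∀ i, c i ∈ CurveClass U n γ) :
    EquicontinuousOn (fun i s => (c i s, derivWithin (c i) (Icc (-(1 / (n : ℝ))) (1 / n)) s))
      (Icc (-(1 / (n : ℝ))) (1 / n)) := by
  rw [← equicontinuous_restrict_iff]
  refine Metric.equicontinuous_of_continuity_modulus (fun r => max r (n * r ^ γ)) ?_ _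
    fun s t i => max_le_max ?_ ?_
  · have hmod : ContinuousAt (fun r : ℝ => max r (n * r ^ γ)) 0 :=
      continuousAt_id.max (continuousAt_const.mul (Real.continuousAt_rpow_const 0 γ (.inr hγ.le)))
    simpa [Real.zero_rpow hγ.ne'] using hmod.tendsto
  · simpa [Subtype.dist_eq] using
      (lipschitzOnWith_one_of_mem_curveClass (hc i)).dist_le_mul s s.2 t t.2
  · rw [Subtype.dist_eq, Real.dist_eq]
    exact (dist_eq_norm _ _).trans_le ((hc i).2.2.1 t t.2 s s.2)

theorem mem_curveClass_of_tendsto {ι : Type*} {l : Filter ι} [l.NeBot]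
    {c : ι → ℝ → EuclideanSpace ℝ (Fin d)} {c₀ : ℝ → EuclideanSpace ℝ (Fin d)}
    (hU : IsOpen U) (hn : 0 < n) (hc : ∀ i, c i ∈ CurveClass U n γ)
    (hc₀ : ContDiffOn ℝ 1 c₀ (Icc (-(1 / (n : ℝ))) (1 / n)))
    (hval : ∀ s ∈ Icc (-(1 / (n : ℝ))) (1 / n), Tendsto (fun i => c i s) l (𝓝 (c₀ s)))
    (hder : ∀ s ∈ Icc (-(1 / (n : ℝ))) (1 / n),
      Tendsto (fun i => derivWithin (c i) (Icc (-(1 / (n : ℝ))) (1 / n)) s) l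
        (𝓝 (derivWithin c₀ (Icc (-(1 / (n : ℝ))) (1 / n)) s))) :
    c₀ ∈ CurveClass U n γ := by
  refine ⟨hc₀, fun s hs => ?_, fun s₁ hs₁ s₂ hs₂ => ?_, fun s hs => ?_⟩
  · exact tendsto_nhds_unique (hder s hs).norm
      (tendsto_const_nhds.congr fun i => ((hc i).2.1 s hs).symm)
  · exact le_of_tendsto' ((hder s₂ hs₂).sub (hder s₁ hs₁)).norm
      fun i => (hc i).2.2.1 s₁ hs₁ s₂ hs₂
  · exact (isClosed_Kset hU hn).mem_of_tendsto (hval s hs)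
      (Eventually.of_forall fun i => (hc i).2.2.2 s hs)

end CurveClass

/-- Compactness of `𝒞_n^γ(U)` in the `C¹` topology, in sequential form: every sequence of
curves in `𝒞_n^γ(U)` has a subsequence converging, together with its derivatives, uniformly
on `[-1/n, 1/n]` to a curve in `𝒞_n^γ(U)`. -/
theorem curveClass_seq_compact {d : ℕ} (U : Set (EuclideanSpace ℝ (Fin d)))
    (hU : IsOpen U) (hUb : Bornology.IsBounded U) (n : ℕ) (hn : 0 < n) (γ : ℝ)
    (hγ : γ ∈ Ioc (0 : ℝ) 1) (c : ℕ → ℝ → EuclideanSpace ℝ (Fin d))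
    (hc : ∀ ℓ, c ℓ ∈ CurveClass U n γ) :
    ∃ φ : ℕ → ℕ, StrictMono φ ∧ ∃ c₀ ∈ CurveClass U n γ,
      TendstoUniformlyOn (fun k => c (φ k)) c₀ atTop (Icc (-(1 / (n : ℝ))) (1 / n)) ∧
      TendstoUniformlyOn
        (fun k => derivWithin (c (φ k)) (Icc (-(1 / (n : ℝ))) (1 / n)))
        (derivWithin c₀ (Icc (-(1 / (n : ℝ))) (1 / n))) atTop
        (Icc (-(1 / (n : ℝ))) (1 / n)) := by
  have hab : -(1 / (n : ℝ)) < 1 / n := neg_lt_self (by positivity)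
  obtain ⟨φ, hφ, g, hg⟩ := isCompact_Icc.exists_strictMono_tendstoUniformlyOn
    (hUb.isCompact_closure.prod (isCompact_sphere 0 1)) (equicontinuousOn_curveClass hγ.1 hc)
    fun ℓ => mapsTo_closure_prod_sphere_of_mem_curveClass (hc ℓ)
  have hval := uniformContinuous_fst.comp_tendstoUniformlyOn hg
  have hder := uniformContinuous_snd.comp_tendstoUniformlyOn hg
  obtain ⟨hC1, hderiv⟩ := contDiffOn_Icc_of_tendstoUniformlyOn_derivWithin hab
    (fun k => (hc (φ k)).1) (fun t ht => hval.tendsto_at ht) hder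
  replace hder := hder.congr_right hderiv.symm
  exact ⟨φ, hφ, _, mem_curveClass_of_tendsto hU hn (fun k => hc (φ k)) hC1
    (fun t ht => hval.tendsto_at ht) (fun t ht => hder.tendsto_at ht), hval, hder⟩
end

section
/- Let U be a bounded open set in ℝ^d, let n be a positive integer, and let γ ∈ (0,1]. Then ℱ_n^γ(U) is nowhere dense in C(U̅); in particular it has empty interior. -/
open Set Filter Topology

/-!
Perturb `f ∈ C(U̅)` by a finite lacunary sum of plane waves `∑ᵢ a rⁱ⁺¹ cos (8π/ℓᵢ ⟪x, eᵢ⟫)`,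
where the `eᵢ` form a `1/2`-net of the unit sphere and the scales `ℓᵢ = ℓ r²ⁱ` shrink much faster
than the amplitudes. The initial direction `c'(0)` of a curve of `𝒞_n^γ(U)` lies within `1/2` of
some `e_j`; by the Hölder bound on `c'` the curve then advances at speed at least `1/4` along `e_j`
on `[0, ℓ_j]`, so the `j`-th wave runs through a full period there. The lower-frequency waves
barely move on this scale and the higher ones are too small, so the perturbed function oscillates
by about `2 a r^(j+1)` along the curve, far more than the `2 n ℓ_j` allowed for functions of
`ℱ_n^γ(U)`: a whole ball around the perturbation misses `ℱ_n^γ(U)`.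
-/

open Real RealInnerProductSpace

theorem isNowhereDense_of_forall_ball_exists_ball_disjoint {X : Type*} [PseudoMetricSpace X]
    {S : Set X} (h : ∀ x, ∀ ε > 0, ∃ y ∈ Metric.ball x ε, ∃ δ > 0, Disjoint (Metric.ball y δ) S) :
    IsNowhereDense S := by
  refine eq_empty_iff_forall_notMem.2 fun x hx => ?_
  obtain ⟨ε, hε, hball⟩ := Metric.isOpen_iff.1 isOpen_interior x hx
  obtain ⟨y, hyx, δ, hδ, hdisj⟩ := h x ε hε
  obtain ⟨z, hz, hzy⟩ := Metric.mem_closure_iff.1 (interior_subset (hball hyx)) δ hδ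
  exact disjoint_left.1 hdisj (Metric.mem_ball'.2 hzy) hz

theorem exists_fin_net_sphere (E : Type*) [NormedAddCommGroup E] [ProperSpace E] {ε : ℝ}
    (hε : 0 < ε) : ∃ (m : ℕ) (e : Fin m → E), (∀ k, ‖e k‖ = 1) ∧
      ∀ v : E, ‖v‖ = 1 → ∃ k, ‖v - e k‖ < ε := by
  obtain ⟨t, hts, ht, hcover⟩ := (isCompact_sphere (0 : E) 1).finite_cover_balls hε
  refine ⟨ht.toFinset.card, fun k => (ht.toFinset.equivFin.symm k : E), fun k => ?_,
    fun v hv => ?_⟩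
  · simpa using hts (ht.mem_toFinset.1 (ht.toFinset.equivFin.symm k).2)
  · obtain ⟨x, hx, hvx⟩ := mem_iUnion₂.1 (hcover (mem_sphere_zero_iff_norm.2 hv))
    exact ⟨ht.toFinset.equivFin ⟨x, ht.mem_toFinset.2 hx⟩, by simpa [dist_eq_norm] using hvx⟩

theorem exists_cos_eq_of_add_two_pi_le {ψ : ℝ → ℝ} {a b : ℝ} (hab : a ≤ b)
    (hψ : ContinuousOn ψ (Icc a b)) (h2π : ψ a + 2 * π ≤ ψ b) (θ : ℝ) :
    ∃ s ∈ Icc a b, cos (ψ s) = cos θ := by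
  have hθ := toIcoMod_mem_Ico two_pi_pos (ψ a) θ
  obtain ⟨s, hs, hψs⟩ := intermediate_value_Icc hab hψ ⟨hθ.1, by linarith [hθ.2]⟩
  refine ⟨s, hs, ?_⟩
  rw [hψs, ← Real.Angle.cos_coe, Real.Angle.coe_toIcoMod, Real.Angle.cos_coe]

section InnerProductSpace

open Finset

variable {E : Type*} [NormedAddCommGroup E] [InnerProductSpace ℝ E]

theorem mul_le_inner_sub_of_norm_deriv_sub_le {c c' : ℝ → E} {w : E} {ℓ C : ℝ} (hℓ : 0 ≤ ℓ)
    (hw : ‖w‖ = 1) (hc : ∀ s ∈ Icc 0 ℓ, HasDerivWithinAt c (c' s) (Icc 0 ℓ) s)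
    (hC : ∀ s ∈ Icc 0 ℓ, ‖c' s - w‖ ≤ C) :
    (1 - C) * ℓ ≤ ⟪c ℓ - c 0, w⟫ := by
  have hmvt := (convex_Icc 0 ℓ).norm_image_sub_le_of_norm_hasDerivWithin_le
    (f := fun s => c s - s • w)
    (fun s hs => (hc s hs).sub (by simpa using (hasDerivWithinAt_id s _).smul_const w)) hC
    (left_mem_Icc.2 hℓ) (right_mem_Icc.2 hℓ)
  simp only [zero_smul, sub_zero, Real.norm_of_nonneg hℓ] at hmvt
  have hsplit : ⟪c ℓ - c 0, w⟫ = ⟪c ℓ - ℓ • w - c 0, w⟫ + ℓ := by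
    rw [sub_right_comm, inner_sub_left (c ℓ - c 0), real_inner_smul_left,
      real_inner_self_eq_norm_sq, hw]
    ring
  have hdev : |⟪c ℓ - ℓ • w - c 0, w⟫| ≤ C * ℓ :=
    (abs_real_inner_le_norm _ _).trans (by rw [hw, mul_one]; exact hmvt)
  linarith [neg_abs_le ⟪c ℓ - ℓ • w - c 0, w⟫]

noncomputable def wave (A ω : ℝ) (e x : E) : ℝ := A * cos (ω * ⟪x, e⟫)

theorem abs_wave_sub_wave_le {A ω : ℝ} {e : E} (hA : 0 ≤ A) (hω : 0 ≤ ω) (he : ‖e‖ ≤ 1)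
    (x y : E) : |wave A ω e x - wave A ω e y| ≤ A * min 2 (ω * ‖x - y‖) := by
  rw [wave, wave, ← mul_sub, abs_mul, abs_of_nonneg hA]
  gcongr
  refine le_min ?_ ?_
  · linarith [abs_sub (cos (ω * ⟪x, e⟫)) (cos (ω * ⟪y, e⟫)),
      abs_cos_le_one (ω * ⟪x, e⟫), abs_cos_le_one (ω * ⟪y, e⟫)]
  · calc _ ≤ |ω * ⟪x, e⟫ - ω * ⟪y, e⟫| := abs_cos_sub_cos_le _ _
      _ = ω * |⟪x - y, e⟫| := by rw [← mul_sub, ← inner_sub_left, abs_mul, abs_of_nonneg hω]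
      _ ≤ ω * ‖x - y‖ := by
        gcongr
        exact (abs_real_inner_le_norm _ _).trans (mul_le_of_le_one_right (norm_nonneg _) he)

theorem two_mul_sub_sum_le_sum_wave_sub {m : ℕ} {A ω : Fin m → ℝ} {e : Fin m → E}
    (hA : ∀ i, 0 ≤ A i) (hω : ∀ i, 0 ≤ ω i) (he : ∀ i, ‖e i‖ ≤ 1) {j : Fin m} {x y : E}
    (hx : cos (ω j * ⟪x, e j⟫) = 1) (hy : cos (ω j * ⟪y, e j⟫) = -1) :
    2 * A j - ∑ i ∈ univ.erase j, A i * min 2 (ω i * ‖x - y‖) ≤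
      ∑ i, wave (A i) (ω i) (e i) x - ∑ i, wave (A i) (ω i) (e i) y := by
  rw [← sum_sub_distrib, ← add_sum_erase _ _ (mem_univ j)]
  have hj : wave (A j) (ω j) (e j) x - wave (A j) (ω j) (e j) y = 2 * A j := by
    simp only [wave, hx, hy]; ring
  have hrest := (abs_sum_le_sum_abs _ _).trans
    (sum_le_sum fun i (_ : i ∈ univ.erase j) => abs_wave_sub_wave_le (hA i) (hω i) (he i) x y)
  linarith [neg_abs_le (∑ i ∈ univ.erase j, (wave (A i) (ω i) (e i) x - wave (A i) (ω i) (e i) y))]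

end InnerProductSpace

section LacunaryWave

open Finset

variable {E : Type*} [NormedAddCommGroup E] [InnerProductSpace ℝ E] {m : ℕ}

theorem lacunary_term_le {a ℓ M r : ℝ} (ha : 0 ≤ a) (hℓ : 0 < ℓ) (hr : 0 < r) (hM : 1 ≤ M)
    (hrM : 256 * M * r ≤ 1) {i j : ℕ} (hij : i ≠ j) :
    a * r ^ (i + 1) * min 2 (8 * π / (ℓ * r ^ (2 * i)) * (ℓ * r ^ (2 * j))) ≤
      a * r ^ (j + 1) / (8 * M) := by
  have hr1 : r ≤ 1 := by nlinarith
  have hgap : ∀ k : ℕ, 8 * π * r ^ (k + 1) ≤ 1 / (8 * M) := fun k => by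
    rw [le_div_iff₀ (by positivity)]
    calc 8 * π * r ^ (k + 1) * (8 * M) ≤ 8 * 4 * r * (8 * M) := by
          gcongr
          · exact pi_le_four
          · exact pow_le_of_le_one hr.le hr1 (by omega)
      _ ≤ 1 := by linarith
  rcases hij.lt_or_gt with hlt | hgt
  · obtain ⟨k, rfl⟩ := Nat.exists_eq_add_of_lt hlt
    calc _ ≤ a * r ^ (i + 1) * (8 * π / (ℓ * r ^ (2 * i)) * (ℓ * r ^ (2 * (i + k + 1)))) := by
          gcongr; exact min_le_right _ _
      _ = a * r ^ (i + k + 1 + 1) * (8 * π * r ^ (k + 1)) := by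
          field_simp; ring
      _ ≤ a * r ^ (i + k + 1 + 1) * (1 / (8 * M)) := by gcongr; exact hgap k
      _ = _ := by ring
  · obtain ⟨k, rfl⟩ := Nat.exists_eq_add_of_lt hgt
    calc _ ≤ a * r ^ (j + k + 1 + 1) * 2 := by gcongr; exact min_le_left _ _
      _ ≤ a * r ^ (j + 1) * (8 * π * r ^ (k + 1)) := by
          rw [show j + k + 1 + 1 = (j + 1) + (k + 1) by ring, pow_add]
          have : 2 ≤ 8 * π := by linarith [pi_gt_three]
          have : 0 ≤ a * r ^ (j + 1) * r ^ (k + 1) := by positivity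
          nlinarith
      _ ≤ a * r ^ (j + 1) * (1 / (8 * M)) := by gcongr; exact hgap k
      _ = _ := by ring

noncomputable def lacunaryWave (e : Fin m → E) (a ℓ r : ℝ) (x : E) : ℝ :=
  ∑ i : Fin m, wave (a * r ^ ((i : ℕ) + 1)) (8 * π / (ℓ * r ^ (2 * (i : ℕ)))) (e i) x

theorem continuous_lacunaryWave (e : Fin m → E) (a ℓ r : ℝ) :
    Continuous (lacunaryWave e a ℓ r) := by
  unfold lacunaryWave wave
  fun_prop

theorem abs_lacunaryWave_le (e : Fin m → E) {a ℓ r : ℝ} (ha : 0 ≤ a) (hr : 0 ≤ r)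
    (hrm : (m + 1) * r ≤ 1) (x : E) : |lacunaryWave e a ℓ r x| ≤ a := by
  have hr1 : r ≤ 1 := by nlinarith [(m.cast_nonneg : (0 : ℝ) ≤ m)]
  calc |lacunaryWave e a ℓ r x| ≤ ∑ _i : Fin m, a * r := by
        refine (abs_sum_le_sum_abs _ _).trans (sum_le_sum fun i _ => ?_)
        rw [wave, abs_mul, abs_of_nonneg (by positivity)]
        calc _ ≤ a * r ^ ((i : ℕ) + 1) * 1 := by gcongr; exact abs_cos_le_one _
          _ ≤ a * r := by
            rw [mul_one]; gcongr; exact pow_le_of_le_one hr hr1 (by omega)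
    _ = m * r * a := by simp only [sum_const, card_univ, Fintype.card_fin, nsmul_eq_mul]; ring
    _ ≤ a := by nlinarith

theorem lacunaryWave_sub_ge {e : Fin m → E} (he : ∀ i, ‖e i‖ ≤ 1) {a ℓ r : ℝ} (ha : 0 ≤ a)
    (hℓ : 0 < ℓ) (hr : 0 < r) (hrm : 256 * (m + 1) * r ≤ 1) {j : Fin m} {x y : E}
    (hxy : ‖x - y‖ ≤ ℓ * r ^ (2 * (j : ℕ)))
    (hx : cos (8 * π / (ℓ * r ^ (2 * (j : ℕ))) * ⟪x, e j⟫) = 1)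
    (hy : cos (8 * π / (ℓ * r ^ (2 * (j : ℕ))) * ⟪y, e j⟫) = -1) :
    15 / 8 * (a * r ^ ((j : ℕ) + 1)) ≤ lacunaryWave e a ℓ r x - lacunaryWave e a ℓ r y := by
  have hlow := two_mul_sub_sum_le_sum_wave_sub (A := fun i : Fin m => a * r ^ ((i : ℕ) + 1))
    (ω := fun i : Fin m => 8 * π / (ℓ * r ^ (2 * (i : ℕ)))) (fun i => by positivity)
    (fun i => by positivity) he hx hy
  have hrest : ∑ i ∈ univ.erase j, a * r ^ ((i : ℕ) + 1) *
      min 2 (8 * π / (ℓ * r ^ (2 * (i : ℕ))) * ‖x - y‖) ≤ a * r ^ ((j : ℕ) + 1) / 8 := by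
    calc _ ≤ ∑ _i ∈ univ.erase j, a * r ^ ((j : ℕ) + 1) / (8 * (m + 1)) := by
          refine sum_le_sum fun i hi => le_trans ?_ (lacunary_term_le ha hℓ hr (by simp) hrm
            (Fin.val_injective.ne (ne_of_mem_erase hi)))
          gcongr
      _ ≤ a * r ^ ((j : ℕ) + 1) / 8 := by
          rw [sum_const, card_erase_of_mem (mem_univ j), card_univ, Fintype.card_fin,
            nsmul_eq_mul]
          have : ((m - 1 : ℕ) : ℝ) ≤ m + 1 := by norm_cast; omega
          rw [mul_div_assoc', div_le_div_iff₀ (by positivity) (by norm_num)]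
          nlinarith [mul_le_mul_of_nonneg_right this (by positivity : 0 ≤ a * r ^ ((j : ℕ) + 1))]
  simp only [lacunaryWave]
  linarith

end LacunaryWave

section Curves

variable {d n : ℕ} {U : Set (EuclideanSpace ℝ (Fin d))} {γ : ℝ}
  {c : ℝ → EuclideanSpace ℝ (Fin d)}

theorem CurveClass.mem_closure (hc : c ∈ CurveClass U n γ) {s : ℝ}
    (hs : s ∈ Icc (-(1 / (n : ℝ))) (1 / n)) : c s ∈ closure U :=
  subset_closure (hc.2.2.2 s hs).1

theorem CurveClass.norm_sub_le (hc : c ∈ CurveClass U n γ) {u v : ℝ}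
    (hu : u ∈ Icc (-(1 / (n : ℝ))) (1 / n)) (hv : v ∈ Icc (-(1 / (n : ℝ))) (1 / n)) :
    ‖c v - c u‖ ≤ |v - u| := by
  simpa using (convex_Icc _ _).norm_image_sub_le_of_norm_derivWithin_le
    (hc.1.differentiableOn one_ne_zero) (fun s hs => (hc.2.1 s hs).le) hu hv

theorem CurveClass.div_four_le_inner_sub (hc : c ∈ CurveClass U n γ) (hγ : 0 ≤ γ)
    {w : EuclideanSpace ℝ (Fin d)} (hw : ‖w‖ = 1)
    (hcw : ‖derivWithin c (Icc (-(1 / (n : ℝ))) (1 / n)) 0 - w‖ ≤ 1 / 2) {ℓ : ℝ} (hℓ : 0 ≤ ℓ)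
    (hℓn : ℓ ≤ 1 / n) (hℓγ : n * ℓ ^ γ ≤ 1 / 4) : ℓ / 4 ≤ ⟪c ℓ - c 0, w⟫ := by
  have hsub : Icc 0 ℓ ⊆ Icc (-(1 / (n : ℝ))) (1 / n) :=
    Icc_subset_Icc (neg_nonpos.2 (by positivity)) hℓn
  have h0 : (0 : ℝ) ∈ Icc (-(1 / (n : ℝ))) (1 / n) := hsub (left_mem_Icc.2 hℓ)
  have key := mul_le_inner_sub_of_norm_deriv_sub_le (C := 3 / 4) hℓ hw
    (fun s hs => ((hc.1.differentiableOn one_ne_zero) s (hsub hs)).hasDerivWithinAt.mono hsub)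
    fun s hs => ?_
  · linarith
  · calc _ ≤ ‖derivWithin c _ s - derivWithin c _ 0‖ + ‖derivWithin c _ 0 - w‖ :=
          norm_sub_le_norm_sub_add_norm_sub _ _ _
      _ ≤ n * |s - 0| ^ γ + 1 / 2 := add_le_add (hc.2.2.1 0 h0 s (hsub hs)) hcw
      _ ≤ 1 / 4 + 1 / 2 := by
          rw [sub_zero, abs_of_nonneg hs.1]
          gcongr
          exact le_trans (by gcongr; exacts [hs.1, hs.2]) hℓγ
      _ = 3 / 4 := by norm_num

theorem CurveClass.exists_cos_eq_one_and_neg_one (hc : c ∈ CurveClass U n γ) (hγ : 0 ≤ γ)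
    {w : EuclideanSpace ℝ (Fin d)} (hw : ‖w‖ = 1)
    (hcw : ‖derivWithin c (Icc (-(1 / (n : ℝ))) (1 / n)) 0 - w‖ ≤ 1 / 2) {ℓ : ℝ} (hℓ : 0 < ℓ)
    (hℓn : ℓ ≤ 1 / n) (hℓγ : n * ℓ ^ γ ≤ 1 / 4) :
    ∃ s₁ ∈ Icc 0 ℓ, ∃ s₂ ∈ Icc 0 ℓ,
      cos (8 * π / ℓ * ⟪c s₁, w⟫) = 1 ∧ cos (8 * π / ℓ * ⟪c s₂, w⟫) = -1 := by
  have hψ : ContinuousOn (fun s => 8 * π / ℓ * ⟪c s, w⟫) (Icc 0 ℓ) :=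
    continuousOn_const.mul ((hc.1.continuousOn.mono
      (Icc_subset_Icc (neg_nonpos.2 (by positivity)) hℓn)).inner continuousOn_const)
  have hsweep : 8 * π / ℓ * ⟪c 0, w⟫ + 2 * π ≤ 8 * π / ℓ * ⟪c ℓ, w⟫ := by
    have hinner := CurveClass.div_four_le_inner_sub hc hγ hw hcw hℓ.le hℓn hℓγ
    rw [inner_sub_left] at hinner
    calc _ = 8 * π / ℓ * (⟪c 0, w⟫ + ℓ / 4) := by field_simp; ring
      _ ≤ _ := by gcongr; linarith
  obtain ⟨s₁, hs₁, h₁⟩ := exists_cos_eq_of_add_two_pi_le hℓ.le hψ hsweep 0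
  obtain ⟨s₂, hs₂, h₂⟩ := exists_cos_eq_of_add_two_pi_le hℓ.le hψ hsweep π
  exact ⟨s₁, hs₁, s₂, hs₂, h₁.trans cos_zero, h₂.trans cos_pi⟩

theorem extendCl_of_mem (f : C(closure U, ℝ)) {x : EuclideanSpace ℝ (Fin d)}
    (hx : x ∈ closure U) : extendCl U f x = f ⟨x, hx⟩ :=
  dif_pos hx

theorem abs_extendCl_sub_extendCl_le_dist [CompactSpace (closure U)] (f g : C(closure U, ℝ))
    (x : EuclideanSpace ℝ (Fin d)) : |extendCl U f x - extendCl U g x| ≤ dist f g := by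
  unfold extendCl
  split_ifs
  · rw [← Real.dist_eq]
    exact ContinuousMap.dist_apply_le_dist _
  · simp

theorem disjoint_ball_fclass_of_forall_curve [CompactSpace (closure U)] {g : C(closure U, ℝ)}
    {δ : ℝ} (h : ∀ c ∈ CurveClass U n γ, ∃ s₁ ∈ Icc (-(1 / (n : ℝ))) (1 / n),
      ∃ s₂ ∈ Icc (-(1 / (n : ℝ))) (1 / n),
        2 * δ + n * (|s₁| + |s₂|) < extendCl U g (c s₁) - extendCl U g (c s₂)) :
    Disjoint (Metric.ball g δ) (Fclass U n γ) := by
  refine disjoint_left.2 fun f hf ⟨c, hc, hfc⟩ => ?_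
  obtain ⟨s₁, hs₁, s₂, hs₂, hosc⟩ := h c hc
  have hfg := Metric.mem_ball.1 hf
  have h₁ := abs_le.1 (abs_extendCl_sub_extendCl_le_dist f g (c s₁))
  have h₂ := abs_le.1 (abs_extendCl_sub_extendCl_le_dist f g (c s₂))
  have hf₁ := abs_le.1 (hfc s₁ hs₁)
  have hf₂ := abs_le.1 (hfc s₂ hs₂)
  linarith

theorem CurveClass.exists_lacunaryWave_sub_ge (hc : c ∈ CurveClass U n γ) (hγ : 0 ≤ γ) {m : ℕ}
    {e : Fin m → EuclideanSpace ℝ (Fin d)} (he : ∀ k, ‖e k‖ = 1)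
    (hnet : ∀ v : EuclideanSpace ℝ (Fin d), ‖v‖ = 1 → ∃ k, ‖v - e k‖ < 1 / 2) {a ℓ r : ℝ}
    (ha : 0 ≤ a) (hℓ : 0 < ℓ) (hr : 0 < r) (hrm : 256 * (m + 1) * r ≤ 1)
    (hscale : ∀ j : Fin m,
      ℓ * r ^ (2 * (j : ℕ)) ≤ 1 / n ∧ n * (ℓ * r ^ (2 * (j : ℕ))) ^ γ ≤ 1 / 4) :
    ∃ j : Fin m, ∃ s₁ ∈ Icc 0 (ℓ * r ^ (2 * (j : ℕ))), ∃ s₂ ∈ Icc 0 (ℓ * r ^ (2 * (j : ℕ))),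
      ‖c s₁ - c s₂‖ ≤ ℓ * r ^ (2 * (j : ℕ)) ∧
        15 / 8 * (a * r ^ ((j : ℕ) + 1)) ≤
          lacunaryWave e a ℓ r (c s₁) - lacunaryWave e a ℓ r (c s₂) := by
  obtain ⟨j, hj⟩ := hnet _ (hc.2.1 0 ⟨neg_nonpos.2 (by positivity), by positivity⟩)
  obtain ⟨hℓjn, hℓjγ⟩ := hscale j
  obtain ⟨s₁, hs₁, s₂, hs₂, hx, hy⟩ :=
    CurveClass.exists_cos_eq_one_and_neg_one hc hγ (he j) hj.le (by positivity) hℓjn hℓjγ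
  have hsub : Icc 0 (ℓ * r ^ (2 * (j : ℕ))) ⊆ Icc (-(1 / (n : ℝ))) (1 / n) :=
    Icc_subset_Icc (neg_nonpos.2 (by positivity)) hℓjn
  have hdist := (CurveClass.norm_sub_le hc (hsub hs₂) (hsub hs₁)).trans
    (abs_sub_le_of_nonneg_of_le hs₁.1 hs₁.2 hs₂.1 hs₂.2)
  exact ⟨j, s₁, hs₁, s₂, hs₂, hdist,
    lacunaryWave_sub_ge (fun i => (he i).le) ha hℓ hr hrm hdist hx hy⟩

end Curves

theorem exists_pos_forall_small_scale {n : ℕ} (hn : 0 < n) {γ η δ : ℝ} (hγ : 0 < γ)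
    (hη : 0 < η) (hδ : 0 < δ) : ∃ ℓ > (0 : ℝ), ∀ t ∈ Icc 0 ℓ,
      t < 1 / n ∧ n * t ^ γ < 1 / 4 ∧ t < η ∧ n * t < δ := by
  have hsmall : ∀ᶠ t : ℝ in 𝓝 0, t < 1 / n ∧ n * t ^ γ < 1 / 4 ∧ t < η ∧ n * t < δ :=
    (continuousAt_id.eventually_lt continuousAt_const (by positivity)).and <|
      ((continuousAt_const.mul (continuousAt_rpow_const 0 γ (Or.inr hγ.le))).eventually_lt
        continuousAt_const (by simp [zero_rpow hγ.ne'])).and <|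
      (continuousAt_id.eventually_lt continuousAt_const hη).and <|
      (continuousAt_const.mul continuousAt_id).eventually_lt continuousAt_const (by simpa)
  obtain ⟨ℓ₀, hℓ₀, hℓ₀small⟩ := Metric.eventually_nhds_iff.1 hsmall
  refine ⟨ℓ₀ / 2, by positivity, fun t ht => hℓ₀small ?_⟩
  rw [dist_zero_right, norm_of_nonneg ht.1]
  linarith [ht.2]

theorem exists_mem_ball_disjoint_ball_fclass {d n : ℕ} {U : Set (EuclideanSpace ℝ (Fin d))}
    {γ : ℝ} [CompactSpace (closure U)] (hn : 0 < n) (hγ : 0 < γ) (f : C(closure U, ℝ)) {ε : ℝ}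
    (hε : 0 < ε) : ∃ g ∈ Metric.ball f ε, ∃ δ > 0, Disjoint (Metric.ball g δ) (Fclass U n γ) := by
  obtain ⟨m, e, he, hnet⟩ := exists_fin_net_sphere (EuclideanSpace ℝ (Fin d)) one_half_pos
  set r : ℝ := 1 / (256 * (m + 1))
  have hr : 0 < r := by positivity
  have hrm : 256 * (m + 1) * r = 1 := by simp only [r]; field_simp
  have hr1 : r ≤ 1 := by nlinarith [(m.cast_nonneg : (0 : ℝ) ≤ m)]
  set a := ε / 2
  have ha : 0 < a := by positivity
  set δ := a * r ^ (m + 1) / 8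
  have hδ : 0 < δ := by positivity
  obtain ⟨η, hη, hfη⟩ := Metric.uniformContinuous_iff.1
    (CompactSpace.uniformContinuous_of_continuous f.continuous) δ hδ
  obtain ⟨ℓ, hℓ, hℓsmall⟩ := exists_pos_forall_small_scale hn hγ hη hδ
  have hscale : ∀ j : Fin m, ℓ * r ^ (2 * (j : ℕ)) < 1 / n ∧
      n * (ℓ * r ^ (2 * (j : ℕ))) ^ γ < 1 / 4 ∧ ℓ * r ^ (2 * (j : ℕ)) < η ∧
      n * (ℓ * r ^ (2 * (j : ℕ))) < δ := fun j =>
    hℓsmall _ ⟨by positivity, mul_le_of_le_one_right hℓ.le (pow_le_one₀ hr.le hr1)⟩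
  let φ : C(EuclideanSpace ℝ (Fin d), ℝ) :=
    ⟨lacunaryWave e a ℓ r, continuous_lacunaryWave e a ℓ r⟩
  refine ⟨f + φ.restrict (closure U), ?_, δ, hδ,
    disjoint_ball_fclass_of_forall_curve fun c hc => ?_⟩
  · rw [Metric.mem_ball, dist_self_add_left]
    refine ((ContinuousMap.norm_le _ ha.le).2 fun x => ?_).trans_lt (by simp only [a]; linarith)
    exact abs_lacunaryWave_le e ha.le hr.le (by linarith) x
  obtain ⟨j, s₁, hs₁, s₂, hs₂, hdist, hwave⟩ :=
    CurveClass.exists_lacunaryWave_sub_ge hc hγ.le he hnet ha.le (by positivity) hr hrm.le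
      fun j => ⟨(hscale j).1.le, (hscale j).2.1.le⟩
  obtain ⟨hℓjn, -, hℓjη, hℓjδ⟩ := hscale j
  have hsub : Icc 0 (ℓ * r ^ (2 * (j : ℕ))) ⊆ Icc (-(1 / (n : ℝ))) (1 / n) :=
    Icc_subset_Icc (neg_nonpos.2 (by positivity)) hℓjn.le
  have hx₁ := CurveClass.mem_closure hc (hsub hs₁)
  have hx₂ := CurveClass.mem_closure hc (hsub hs₂)
  have hfosc : |f ⟨c s₁, hx₁⟩ - f ⟨c s₂, hx₂⟩| < δ :=
    hfη (by rw [Subtype.dist_eq, dist_eq_norm]; exact hdist.trans_lt hℓjη)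
  have hδj : δ ≤ a * r ^ ((j : ℕ) + 1) / 8 := by
    have := pow_le_pow_of_le_one hr.le hr1 (Nat.succ_le_succ j.isLt.le)
    simp only [δ]
    gcongr
  -- `g` oscillates by at least `15/8 A_j - δ` between `c s₁` and `c s₂`, while
  -- `2δ + n (s₁ + s₂) < 4δ ≤ A_j / 2`, where `A_j = a r^(j+1)`.
  refine ⟨s₁, hsub hs₁, s₂, hsub hs₂, ?_⟩
  rw [extendCl_of_mem _ hx₁, extendCl_of_mem _ hx₂, abs_of_nonneg hs₁.1, abs_of_nonneg hs₂.1]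
  simp only [φ, ContinuousMap.add_apply, ContinuousMap.restrict_apply, ContinuousMap.coe_mk]
  linarith [abs_lt.1 hfosc, mul_le_mul_of_nonneg_left hs₁.2 n.cast_nonneg,
    mul_le_mul_of_nonneg_left hs₂.2 n.cast_nonneg]

theorem fclass_isNowhereDense_general {d : ℕ} (U : Set (EuclideanSpace ℝ (Fin d)))
    (hUb : Bornology.IsBounded U) (n : ℕ) (hn : 0 < n) (γ : ℝ) (hγ : γ ∈ Ioc (0 : ℝ) 1) :
    IsNowhereDense (Fclass U n γ) ∧ interior (Fclass U n γ) = ∅ := by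
  have : CompactSpace (closure U) := isCompact_iff_compactSpace.1 hUb.isCompact_closure
  have hnd : IsNowhereDense (Fclass U n γ) :=
    isNowhereDense_of_forall_ball_exists_ball_disjoint fun f _ hε =>
      exists_mem_ball_disjoint_ball_fclass hn hγ.1 f hε
  exact ⟨hnd, eq_empty_of_subset_empty (hnd ▸ interior_mono subset_closure)⟩

/-- `ℱ_n^γ(U)` is nowhere dense in `C(U̅)`; in particular it has empty interior. -/
theorem fclass_isNowhereDense {d : ℕ} (U : Set (EuclideanSpace ℝ (Fin d))) (hU : IsOpen U)
    (hUb : Bornology.IsBounded U) (n : ℕ) (hn : 0 < n) (γ : ℝ) (hγ : γ ∈ Ioc (0 : ℝ) 1) :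
    IsNowhereDense (Fclass U n γ) ∧ interior (Fclass U n γ) = ∅ :=
  fclass_isNowhereDense_general U hUb n hn γ hγ
end

section
/- Let U be a bounded open set in ℝ^d and let f ∈ C(U̅). If f ∉ ℱ_n^{1/n}(U) for every positive integer n, then the restriction of f to U is strongly nowhere differentiable. -/
/-! If `f ∘ c` were differentiable at `s₀`, it would satisfy `‖f (c (s₀ + s)) - f (c s₀)‖ ≤ C |s|`
near `s₀`. The compact image of `c` keeps a positive distance from `∂U`, and a `γ`-Hölder bound `ρ`
on `c'` becomes a `1/n`-Hölder bound `n` on intervals of length `≤ 1` once `1/n ≤ γ` and `ρ ≤ n`.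
So for every large `n` the recentred curve `c (s₀ + ·)` on `[-1/n, 1/n]` lies in `𝒞_n^{1/n}(U)`
and witnesses `f ∈ ℱ_n^{1/n}(U)`. -/

open Set Filter Topology

/-- A test curve in `ℝ^d`: a `C¹` curve `c : [a,b] → ℝ^d` (with `a < b`) of unit speed
whose derivative is `γ`-Hölder for some `γ ∈ (0,1]`. -/
def IsTestCurve {d : ℕ} (a b : ℝ) (c : ℝ → EuclideanSpace ℝ (Fin d)) : Prop :=
  a < b ∧ ContDiffOn ℝ 1 c (Icc a b) ∧
    (∀ s ∈ Icc a b, ‖derivWithin c (Icc a b) s‖ = 1) ∧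
    ∃ γ ∈ Ioc (0 : ℝ) 1, ∃ ρ : ℝ, 0 ≤ ρ ∧
      ∀ s₁ ∈ Icc a b, ∀ s₂ ∈ Icc a b,
        ‖derivWithin c (Icc a b) s₂ - derivWithin c (Icc a b) s₁‖ ≤ ρ * |s₂ - s₁| ^ γ

/-- `f` is strongly nowhere differentiable on `U`: for every test curve with image in `U`,
the composition `f ∘ c` is differentiable at no point of `(a,b)`. -/
def StronglyNowhereDiffOn {d : ℕ} (f : EuclideanSpace ℝ (Fin d) → ℝ)
    (U : Set (EuclideanSpace ℝ (Fin d))) : Prop :=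
  ∀ (a b : ℝ) (c : ℝ → EuclideanSpace ℝ (Fin d)), IsTestCurve a b c →
    (∀ s ∈ Icc a b, c s ∈ U) →
    ∀ s₀ ∈ Ioo a b, ¬ DifferentiableWithinAt ℝ (f ∘ c) (Icc a b) s₀

lemma eventually_one_div_lt {r : ℝ} (hr : 0 < r) : ∀ᶠ n : ℕ in atTop, 1 / (n : ℝ) < r :=
  tendsto_one_div_atTop_nhds_zero_nat.eventually (gt_mem_nhds hr)

lemma DifferentiableAt.eventually_norm_sub_le {E : Type*} [NormedAddCommGroup E]
    [NormedSpace ℝ E] {g : ℝ → E} {x : ℝ} (hg : DifferentiableAt ℝ g x) :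
    ∀ᶠ n : ℕ in atTop, ∀ s : ℝ, |s| ≤ 1 / n → ‖g (x + s) - g x‖ ≤ n * |s| := by
  obtain ⟨C, hC⟩ := hg.hasDerivAt.isBigO_sub.bound
  obtain ⟨δ, hδ, hball⟩ := Metric.eventually_nhds_iff.1 hC
  filter_upwards [eventually_one_div_lt hδ,
    tendsto_natCast_atTop_atTop.eventually_ge_atTop C] with n hnδ hCn s hs
  have hbound : ‖g (x + s) - g x‖ ≤ C * |s| := by
    simpa using hball (y := x + s) (by simpa [Real.dist_eq] using hs.trans_lt hnδ)
  exact hbound.trans (by gcongr)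

lemma eventually_subset_Kset {d : ℕ} {U K : Set (EuclideanSpace ℝ (Fin d))} (hU : IsOpen U)
    (hK : IsCompact K) (hKU : K ⊆ U) : ∀ᶠ n : ℕ in atTop, K ⊆ Kset U n := by
  obtain ⟨δ, hδ, hthick⟩ := hK.exists_thickening_subset_open hU hKU
  filter_upwards [eventually_one_div_lt hδ] with n hn u hu
  refine ⟨hKU hu, fun x hx => ?_⟩
  by_contra! hux
  have hx_thick : x ∈ Metric.thickening δ K :=
    Metric.mem_thickening_iff.2 ⟨u, hu, by rw [dist_comm, dist_eq_norm]; linarith⟩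
  exact (hU.frontier_eq ▸ hx).2 (hthick hx_thick)

open scoped Pointwise in
lemma derivWithin_comp_const_add_Icc {E : Type*} [NormedAddCommGroup E] [NormedSpace ℝ E]
    {c : ℝ → E} {a b s₀ r s : ℝ} (hc : DifferentiableOn ℝ c (Icc a b)) (hr : 0 < r)
    (hsub : Icc (s₀ - r) (s₀ + r) ⊆ Icc a b) (hs : s ∈ Icc (-r) r) :
    derivWithin (fun t => c (s₀ + t)) (Icc (-r) r) s = derivWithin c (Icc a b) (s₀ + s) := by
  have hshift : s₀ +ᵥ Icc (-r) r = Icc (s₀ - r) (s₀ + r) := by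
    rw [vadd_Icc, sub_eq_add_neg]
  have hmem : s₀ + s ∈ Icc (s₀ - r) (s₀ + r) := ⟨by linarith [hs.1], by linarith [hs.2]⟩
  rw [derivWithin_comp_const_add c s₀, hshift]
  exact derivWithin_subset hsub (uniqueDiffOn_Icc (by linarith) _ hmem) (hc _ (hsub hmem))

lemma IsTestCurve.eventually_comp_const_add_mem_curveClass {d : ℕ}
    {U : Set (EuclideanSpace ℝ (Fin d))} {a b s₀ : ℝ} {c : ℝ → EuclideanSpace ℝ (Fin d)}
    (hc : IsTestCurve a b c) (hU : IsOpen U) (himg : ∀ s ∈ Icc a b, c s ∈ U)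
    (hs₀ : s₀ ∈ Ioo a b) :
    ∀ᶠ n : ℕ in atTop, (fun s => c (s₀ + s)) ∈ CurveClass U n (1 / n) := by
  obtain ⟨-, hC1, hspeed, γ, hγ, ρ, -, hHolder⟩ := hc
  have hKn := eventually_subset_Kset hU (isCompact_Icc.image_of_continuousOn hC1.continuousOn)
    (image_subset_iff.2 himg)
  filter_upwards [hKn, eventually_one_div_lt (sub_pos.2 hs₀.1),
    eventually_one_div_lt (sub_pos.2 hs₀.2), eventually_one_div_lt hγ.1,
    eventually_one_div_lt one_half_pos, tendsto_natCast_atTop_atTop.eventually_ge_atTop ρ,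
    eventually_gt_atTop 0] with n hK ha hb hγn hhalf hρn hn
  set r := 1 / (n : ℝ)
  have hr : 0 < r := by positivity
  have hmaps : MapsTo (s₀ + ·) (Icc (-r) r) (Icc a b) := fun s hs =>
    ⟨by linarith [hs.1], by linarith [hs.2]⟩
  have hsub : Icc (s₀ - r) (s₀ + r) ⊆ Icc a b := Icc_subset_Icc (by linarith) (by linarith)
  have hderiv : ∀ s ∈ Icc (-r) r,
      derivWithin (fun t => c (s₀ + t)) (Icc (-r) r) s = derivWithin c (Icc a b) (s₀ + s) :=
    fun s hs => derivWithin_comp_const_add_Icc (hC1.differentiableOn one_ne_zero) hr hsub hs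
  refine ⟨hC1.comp (contDiff_const.add contDiff_id).contDiffOn hmaps,
    fun s hs => hderiv s hs ▸ hspeed _ (hmaps hs), fun s₁ hs₁ s₂ hs₂ => ?_,
    fun s hs => hK ⟨_, hmaps hs, rfl⟩⟩
  have hdist : |s₂ - s₁| ≤ 1 := by
    rw [abs_le]; constructor <;> linarith [hs₁.1, hs₁.2, hs₂.1, hs₂.2]
  rw [hderiv s₁ hs₁, hderiv s₂ hs₂]
  calc _ ≤ ρ * |s₀ + s₂ - (s₀ + s₁)| ^ γ := hHolder _ (hmaps hs₁) _ (hmaps hs₂)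
    _ = ρ * |s₂ - s₁| ^ γ := by rw [add_sub_add_left_eq_sub]
    _ ≤ n * |s₂ - s₁| ^ r := mul_le_mul hρn
      (Real.rpow_le_rpow_of_exponent_ge' (abs_nonneg _) hdist hr.le hγn.le) (by positivity)
      (by positivity)

theorem stronglyNowhereDiff_of_not_mem_fclass_general {d : ℕ} (U : Set (EuclideanSpace ℝ (Fin d)))
    (hU : IsOpen U) (f : C(closure U, ℝ))
    (hf : ∀ n : ℕ, 0 < n → f ∉ Fclass U n (1 / n)) :
    StronglyNowhereDiffOn (extendCl U f) U := by
  intro a b c hc himg s₀ hs₀ hdiff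
  have hdiffAt := hdiff.differentiableAt (Icc_mem_nhds hs₀.1 hs₀.2)
  obtain ⟨n, hcurve, hlip, hn⟩ := ((hc.eventually_comp_const_add_mem_curveClass hU himg hs₀).and
    (hdiffAt.eventually_norm_sub_le.and (eventually_gt_atTop 0))).exists
  refine hf n hn ⟨_, hcurve, fun s hs => ?_⟩
  simpa only [add_zero, Function.comp_apply, Real.norm_eq_abs] using hlip s (abs_le.2 hs)

/-- If `f ∈ C(U̅)` lies in no `ℱ_n^{1/n}(U)`, then the restriction of `f` to `U` is
strongly nowhere differentiable. -/
theorem stronglyNowhereDiff_of_not_mem_fclass {d : ℕ} (U : Set (EuclideanSpace ℝ (Fin d)))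
    (hU : IsOpen U) (hUb : Bornology.IsBounded U) (f : C(closure U, ℝ))
    (hf : ∀ n : ℕ, 0 < n → f ∉ Fclass U n (1 / n)) :
    StronglyNowhereDiffOn (extendCl U f) U :=
  stronglyNowhereDiff_of_not_mem_fclass_general U hU f hf
end

section
/- Suppose 0 < α < 1 and b is an even positive integer. Then Φ is α-Hölder continuous on ℝ: there exists a constant C ≥ 0 such that |Φ(x) − Φ(y)| ≤ C|x − y|^α for all x, y ∈ ℝ. In fact one may take C = b^{1−α}/(1 − b^{−(1−α)}) + b^{−α}/(1 − b^{−α}). -/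
open Set Filter Topology

/-- The sawtooth function `φ(x) = dist(x, 2ℤ)`. -/
noncomputable def sawtooth (x : ℝ) : ℝ :=
  Metric.infDist x {y : ℝ | ∃ m : ℤ, y = 2 * m}

/-- Katzourakis' function `Φ(x) = Σ_{k=0}^∞ b^{-kα} φ(b^k x)`. -/
noncomputable def Phi (b : ℕ) (α : ℝ) (x : ℝ) : ℝ :=
  ∑' k : ℕ, (b : ℝ) ^ (-((k : ℝ) * α)) * sawtooth ((b : ℝ) ^ k * x)

/-!
With `t = |x - y|`, the `k`-th term of `Φ(x) - Φ(y)` is bounded both by `b^{-kα}` (as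
`0 ≤ φ ≤ 1`) and by `b^{k(1-α)} t` (as `φ` is `1`-Lipschitz). For `t ≤ 1` pick `m` with
`b^m t ≤ 1 < b^{m+1} t`. The Lipschitz bounds for `k ≤ m + 1` form a geometric sum dominated
by its last term `b^{(m+1)(1-α)} t ≤ b^{1-α} t^α`, and the bounds `b^{-kα}` for `k ≥ m + 2`
form a geometric tail dominated by `b^{-(m+2)α} < b^{-α} t^α`. For `t > 1` the uniform bound
`Σ b^{-kα}` suffices.
-/

lemma sawtooth_mem_Icc (x : ℝ) : sawtooth x ∈ Icc 0 1 := by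
  refine ⟨Metric.infDist_nonneg, ?_⟩
  calc sawtooth x ≤ dist x (2 * round (x / 2)) :=
        Metric.infDist_le_dist_of_mem ⟨round (x / 2), rfl⟩
    _ = |2 * (x / 2 - round (x / 2))| := by rw [Real.dist_eq]; ring_nf
    _ ≤ 1 := by rw [abs_mul, abs_two]; linarith [abs_sub_round (x / 2)]

lemma lipschitzWith_sawtooth : LipschitzWith 1 sawtooth := Metric.lipschitz_infDist_pt _

noncomputable def holderConst (B α : ℝ) : ℝ :=
  B ^ (1 - α) / (1 - B ^ (-(1 - α))) + B ^ (-α) / (1 - B ^ (-α))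

section

variable {B α t : ℝ}

lemma inv_one_sub_rpow_neg_le_holderConst (hB : 1 < B) (hα0 : 0 < α) (hα1 : α < 1) :
    (1 - B ^ (-α))⁻¹ ≤ holderConst B α := by
  have hr : B ^ (-α) < 1 := Real.rpow_lt_one_of_one_lt_of_neg hB (by linarith)
  have hs : 1 ≤ B ^ (1 - α) / (1 - B ^ (-(1 - α))) := by
    rw [le_div_iff₀ (sub_pos.2 (Real.rpow_lt_one_of_one_lt_of_neg hB (by linarith)))]
    linarith [Real.one_lt_rpow hB (sub_pos.2 hα1),
      Real.rpow_nonneg (by linarith : 0 ≤ B) (-(1 - α))]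
  have : (1 - B ^ (-α))⁻¹ = 1 + B ^ (-α) / (1 - B ^ (-α)) := by
    field_simp [(sub_pos.2 hr).ne']
    ring
  rw [this, holderConst]
  linarith

lemma holderConst_pos (hB : 1 < B) (hα0 : 0 < α) (hα1 : α < 1) : 0 < holderConst B α :=
  (inv_pos.2 (sub_pos.2 (Real.rpow_lt_one_of_one_lt_of_neg hB (by linarith)))).trans_le
    (inv_one_sub_rpow_neg_le_holderConst hB hα0 hα1)

lemma rpow_one_sub_pow_mul_le (hB : 0 ≤ B) (ht : 0 < t) (hα : α ≤ 1) {m : ℕ}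
    (h : B ^ m * t ≤ 1) : (B ^ (1 - α)) ^ m * t ≤ t ^ α := by
  have : (B ^ (1 - α)) ^ m * t = (B ^ m * t) ^ (1 - α) * t ^ α := by
    rw [Real.rpow_pow_comm hB, Real.mul_rpow (by positivity) ht.le, mul_assoc,
      ← Real.rpow_add ht]
    simp
  rw [this]
  exact mul_le_of_le_one_left (by positivity) (Real.rpow_le_one (by positivity) h (by linarith))

lemma rpow_neg_pow_le (hB : 0 ≤ B) (ht : 0 < t) (hα : 0 ≤ α) {m : ℕ}
    (h : 1 ≤ B ^ m * t) : (B ^ (-α)) ^ m ≤ t ^ α := by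
  have : (B ^ (-α)) ^ m = (B ^ m * t) ^ (-α) * t ^ α := by
    rw [Real.rpow_pow_comm hB, Real.mul_rpow (by positivity) ht.le, mul_assoc,
      ← Real.rpow_add ht]
    simp
  rw [this]
  exact mul_le_of_le_one_left (by positivity)
    (Real.rpow_le_one_of_one_le_of_nonpos h (by linarith))

lemma tsum_le_holderConst_mul_of_le_one (hB : 1 < B) (hα0 : 0 < α) (hα1 : α < 1)
    (ht0 : 0 < t) (ht1 : t ≤ 1) {a : ℕ → ℝ} (ha0 : ∀ k, 0 ≤ a k)
    (har : ∀ k, a k ≤ (B ^ (-α)) ^ k) (has : ∀ k, a k ≤ (B ^ (1 - α)) ^ k * t) :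
    ∑' k, a k ≤ holderConst B α * t ^ α := by
  rw [holderConst, Real.rpow_neg (by linarith) (1 - α)]
  set r := B ^ (-α)
  set s := B ^ (1 - α)
  have hr0 : 0 ≤ r := by positivity
  have hr1 : r < 1 := Real.rpow_lt_one_of_one_lt_of_neg hB (by linarith)
  have hs1 : 1 < s := Real.one_lt_rpow hB (by linarith)
  have hgeom := summable_geometric_of_lt_one hr0 hr1
  obtain ⟨m, hm, hm1⟩ := exists_nat_pow_near (one_le_one_div ht0 ht1) hB
  rw [le_div_iff₀ ht0] at hm
  rw [div_lt_iff₀ ht0] at hm1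
  have ha : Summable a := .of_nonneg_of_le ha0 har hgeom
  have head : ∑ k ∈ Finset.range (m + 2), a k ≤ s / (1 - s⁻¹) * t ^ α := calc
    ∑ k ∈ Finset.range (m + 2), a k ≤ (∑ k ∈ Finset.range (m + 2), s ^ k) * t := by
      rw [Finset.sum_mul]
      exact Finset.sum_le_sum fun k _ => has k
    _ = (s ^ (m + 2) - 1) / (s - 1) * t := by rw [geom_sum_eq hs1.ne']
    _ ≤ s ^ (m + 2) / (s - 1) * t := by gcongr; linarith
    _ = s / (1 - s⁻¹) * (s ^ m * t) := by
      field_simp [(sub_pos.2 hs1).ne']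
      ring
    _ ≤ s / (1 - s⁻¹) * t ^ α := by
      have : 0 ≤ s / (1 - s⁻¹) :=
        div_nonneg (by linarith) (sub_nonneg.2 (inv_le_one_of_one_le₀ hs1.le))
      gcongr
      exact rpow_one_sub_pow_mul_le (by linarith) ht0 hα1.le hm
  have tail : ∑' k, a (k + (m + 2)) ≤ r / (1 - r) * t ^ α := calc
    ∑' k, a (k + (m + 2)) ≤ ∑' k, r ^ k * r ^ (m + 2) :=
      Summable.tsum_le_tsum (fun k => (har _).trans_eq (pow_add _ _ _))
        ((summable_nat_add_iff _).2 ha) (hgeom.mul_right _)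
    _ = r / (1 - r) * r ^ (m + 1) := by
      rw [tsum_mul_right, tsum_geometric_of_lt_one hr0 hr1]
      ring
    _ ≤ r / (1 - r) * t ^ α := by
      have : 0 ≤ r / (1 - r) := div_nonneg hr0 (by linarith)
      gcongr
      exact rpow_neg_pow_le (by linarith) ht0 hα0.le hm1.le
  rw [← ha.sum_add_tsum_nat_add (m + 2), add_mul]
  exact add_le_add head tail

lemma tsum_le_holderConst_mul (hB : 1 < B) (hα0 : 0 < α) (hα1 : α < 1) (ht : 0 ≤ t)
    {a : ℕ → ℝ} (ha0 : ∀ k, 0 ≤ a k) (har : ∀ k, a k ≤ (B ^ (-α)) ^ k)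
    (has : ∀ k, a k ≤ (B ^ (1 - α)) ^ k * t) :
    ∑' k, a k ≤ holderConst B α * t ^ α := by
  rcases ht.eq_or_lt with rfl | ht0
  · rw [Real.zero_rpow hα0.ne', mul_zero]
    exact tsum_nonpos fun k => by simpa using has k
  rcases le_or_gt t 1 with ht1 | ht1
  · exact tsum_le_holderConst_mul_of_le_one hB hα0 hα1 ht0 ht1 ha0 har has
  have hr1 : B ^ (-α) < 1 := Real.rpow_lt_one_of_one_lt_of_neg hB (by linarith)
  have hgeom := summable_geometric_of_lt_one (by positivity) hr1
  calc ∑' k, a k ≤ ∑' k, (B ^ (-α)) ^ k :=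
        Summable.tsum_le_tsum har (.of_nonneg_of_le ha0 har hgeom) hgeom
    _ = (1 - B ^ (-α))⁻¹ := tsum_geometric_of_lt_one (by positivity) hr1
    _ ≤ holderConst B α := inv_one_sub_rpow_neg_le_holderConst hB hα0 hα1
    _ ≤ holderConst B α * t ^ α :=
        le_mul_of_one_le_right (holderConst_pos hB hα0 hα1).le (Real.one_le_rpow ht1.le hα0.le)

theorem abs_tsum_sub_tsum_le_holderConst_mul (hB : 1 < B) (hα0 : 0 < α) (hα1 : α < 1)
    {g : ℝ → ℝ} (hg : LipschitzWith 1 g) (hg01 : ∀ x, g x ∈ Icc 0 1) (x y : ℝ) :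
    |∑' k : ℕ, B ^ (-((k : ℝ) * α)) * g (B ^ k * x) -
        ∑' k : ℕ, B ^ (-((k : ℝ) * α)) * g (B ^ k * y)| ≤
      holderConst B α * |x - y| ^ α := by
  have hB0 : 0 < B := by linarith
  have hpow (k : ℕ) : B ^ (-((k : ℝ) * α)) = (B ^ (-α)) ^ k := by
    rw [Real.rpow_pow_comm hB0.le, ← Real.rpow_natCast_mul hB0.le, neg_mul_eq_mul_neg]
  have hrs (k : ℕ) : (B ^ (-α)) ^ k * B ^ k = (B ^ (1 - α)) ^ k := by
    rw [← mul_pow, ← Real.rpow_add_one hB0.ne', neg_add_eq_sub]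
  have hr1 : B ^ (-α) < 1 := Real.rpow_lt_one_of_one_lt_of_neg hB (by linarith)
  have hgeom := summable_geometric_of_lt_one (by positivity) hr1
  simp_rw [hpow]
  set d : ℕ → ℝ := fun k => (B ^ (-α)) ^ k * g (B ^ k * x) - (B ^ (-α)) ^ k * g (B ^ k * y)
  have hd (k : ℕ) : |d k| = (B ^ (-α)) ^ k * |g (B ^ k * x) - g (B ^ k * y)| := by
    simp only [d]
    rw [← mul_sub, abs_mul, abs_of_nonneg (by positivity)]
  have hdr (k : ℕ) : |d k| ≤ (B ^ (-α)) ^ k := by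
    rw [hd]
    exact mul_le_of_le_one_right (by positivity)
      (abs_sub_le_of_nonneg_of_le (hg01 _).1 (hg01 _).2 (hg01 _).1 (hg01 _).2)
  have hds (k : ℕ) : |d k| ≤ (B ^ (1 - α)) ^ k * |x - y| := by
    have hlip : |g (B ^ k * x) - g (B ^ k * y)| ≤ B ^ k * |x - y| := by
      simpa [Real.dist_eq, ← mul_sub, abs_mul, abs_of_pos hB0] using
        hg.dist_le_mul (B ^ k * x) (B ^ k * y)
    rw [hd, ← hrs, mul_assoc]
    gcongr
  have hsum (z : ℝ) : Summable fun k : ℕ => (B ^ (-α)) ^ k * g (B ^ k * z) :=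
    .of_norm_bounded hgeom fun k => by
      rw [Real.norm_eq_abs, abs_mul, abs_of_nonneg (by positivity)]
      exact mul_le_of_le_one_right (by positivity)
        (abs_le.2 ⟨by linarith [(hg01 (B ^ k * z)).1], (hg01 _).2⟩)
  rw [← (hsum x).tsum_sub (hsum y)]
  have hdsum : Summable fun k => ‖d k‖ := .of_nonneg_of_le (fun k => norm_nonneg _) hdr hgeom
  calc |∑' k, d k| ≤ ∑' k, |d k| := norm_tsum_le_tsum_norm hdsum
    _ ≤ holderConst B α * |x - y| ^ α :=
        tsum_le_holderConst_mul hB hα0 hα1 (abs_nonneg _) (fun k => abs_nonneg _) hdr hds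

end

/-- If `0 < α < 1` and `b` is an even positive integer, then `Φ` is `α`-Hölder on `ℝ`,
with constant `C = b^{1-α}/(1 - b^{-(1-α)}) + b^{-α}/(1 - b^{-α})`. -/
theorem phi_holder (α : ℝ) (hα0 : 0 < α) (hα1 : α < 1) (b : ℕ) (hb : 0 < b)
    (hbe : Even b) :
    (∃ C : ℝ, 0 ≤ C ∧ ∀ x y : ℝ, |Phi b α x - Phi b α y| ≤ C * |x - y| ^ α) ∧
    ∀ x y : ℝ, |Phi b α x - Phi b α y| ≤
      ((b : ℝ) ^ (1 - α) / (1 - (b : ℝ) ^ (-(1 - α))) +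
        (b : ℝ) ^ (-α) / (1 - (b : ℝ) ^ (-α))) * |x - y| ^ α := by
  have hB : 1 < (b : ℝ) := by
    obtain ⟨m, rfl⟩ := hbe
    norm_cast
    omega
  have key := abs_tsum_sub_tsum_le_holderConst_mul hB hα0 hα1 lipschitzWith_sawtooth
    sawtooth_mem_Icc
  exact ⟨⟨_, (holderConst_pos hB hα0 hα1).le, key⟩, key⟩
end
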